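/- arXiv:1711.01931 — 5 statements merged into one kernel-verified Lean document; each statement's English description precedes it below -/
import Mathlib

section
/- Let d ≥ 3 and let Φ : [0,∞) × ℝ → [0,∞) be continuous such that for every r, t ↦ Φ(r,t) is nondecreasing and concave on [0,∞) and Φ(r,t) = 0 for all t ≤ 0. Let u, v : ℝ^d → ℝ be nonnegative radial C² functions with Δu(x) = Φ(‖x‖, u(x)) and Δv(x) = Φ(‖x‖, v(x)) for all x ∈ ℝ^d. If u(0) = v(0) > 0, then u = v on all of ℝ^d. -/
/-!
Write `u x = f ‖x‖` and `v x = g ‖x‖`. The equation becomes `f'' + (d - 1) f' / r = Φ(r, f)`,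
that is `(r^(d-1) f')' = r^(d-1) Φ(r, f)`, and since `d ≥ 2` the left side vanishes at `r = 0`, so
`r^(d-1) f'(r) = ∫₀^r s^(d-1) Φ(s, f s) ds`. As `Φ ≥ 0`, both profiles are nondecreasing and stay
above `f 0 > 0`. On `[f 0, B]` a nondecreasing concave `Φ(r, ·)` with `Φ(r, 0) ≥ 0` is Lipschitz
with constant `Φ(r, B) / f 0`, because its chord slopes are dominated by the slope from the
origin; this is where `u 0 > 0` is needed, since a concave function need not be Lipschitz near
`0`. The integral identity then gives `|f' - g'|(s) ≤ L ∫₀^s |f - g|`, hence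
`|f - g|(r) ≤ R L ∫₀^r |f - g|` on `[0, R]`, and Grönwall's inequality forces `f = g`.
-/

open MeasureTheory Filter Set

/-- The Euclidean Laplacian of `u` at `x`: the sum of the pure second derivatives
in the coordinate directions. -/
noncomputable def laplacian {d : ℕ} (u : EuclideanSpace ℝ (Fin d) → ℝ)
    (x : EuclideanSpace ℝ (Fin d)) : ℝ :=
  ∑ i : Fin d, iteratedFDeriv ℝ 2 u x
    ![EuclideanSpace.single i (1 : ℝ), EuclideanSpace.single i (1 : ℝ)]

theorem ContDiff.iteratedFDeriv_two_apply_same {E F : Type*} [NormedAddCommGroup E]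
    [NormedSpace ℝ E] [NormedAddCommGroup F] [NormedSpace ℝ F] {u : E → F}
    (hu : ContDiff ℝ 2 u) (x y : E) :
    iteratedFDeriv ℝ 2 u x ![y, y] = deriv (deriv fun s : ℝ => u (x + s • y)) 0 := by
  have h_first : deriv (fun s : ℝ => u (x + s • y)) =
      fun t => iteratedFDeriv ℝ 1 u (x + t • y) (fun _ => y) := by
    funext t
    simpa using
      ((hu.contDiffAt (x := x + t • y)).of_le (by norm_num)).deriv_fderiv_add_smul (n := 0)
  have h_second := (hu.contDiffAt (x := x + (0 : ℝ) • y)).deriv_fderiv_add_smul (n := 1)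
  rw [h_first, h_second, zero_smul, add_zero]
  congr 1
  ext i; fin_cases i <;> rfl

theorem deriv_deriv_comp_sqrt_sq_add_sq {f : ℝ → ℝ} (hf : ContDiff ℝ 2 f) {r : ℝ} (hr : 0 < r) :
    deriv (deriv fun s => f √(r ^ 2 + s ^ 2)) 0 = deriv f r / r := by
  set h : ℝ → ℝ := fun s => √(r ^ 2 + s ^ 2)
  have h_pos (s : ℝ) : 0 < h s := by positivity
  have h_zero : h 0 = r := by simp [h, Real.sqrt_sq hr.le]
  have h_deriv (s : ℝ) : HasDerivAt h (s / h s) s := by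
    convert ((hasDerivAt_pow 2 s).const_add (r ^ 2)).sqrt (by positivity) using 1
    simp only [h]
    field_simp
    ring
  have h_first : deriv (fun s => f (h s)) = fun s => deriv f (h s) * (s / h s) :=
    funext fun s => ((hf.differentiable two_ne_zero (h s)).hasDerivAt.comp s (h_deriv s)).deriv
  have h_second : HasDerivAt (fun s => deriv f (h s) * (s / h s)) _ 0 :=
    ((hf.differentiable_deriv_two (h 0)).hasDerivAt.comp 0 (h_deriv 0)).mul
      ((hasDerivAt_id 0).div (h_deriv 0) (h_pos 0).ne')
  rw [h_first, h_second.deriv, Function.comp_apply, h_zero]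
  field_simp
  simp [mul_comm]

theorem EuclideanSpace.norm_smul_single_add_smul_single {d : ℕ} {i j : Fin d} (hij : i ≠ j)
    (r t : ℝ) :
    ‖r • EuclideanSpace.single i (1 : ℝ) + t • EuclideanSpace.single j (1 : ℝ)‖ =
      √(r ^ 2 + t ^ 2) := by
  have h_orth :
      inner ℝ (r • EuclideanSpace.single i (1 : ℝ)) (t • EuclideanSpace.single j 1) = 0 := by
    simp [real_inner_smul_left, real_inner_smul_right, EuclideanSpace.inner_single_left, hij.symm]
  rw [norm_add_eq_sqrt_iff_real_inner_eq_zero.mpr h_orth]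
  simp [norm_smul, ← sq]

noncomputable def radialProfile {d : ℕ} (u : EuclideanSpace ℝ (Fin d) → ℝ) (i : Fin d) (r : ℝ) :
    ℝ :=
  u (r • EuclideanSpace.single i 1)

section radialProfile

variable {d : ℕ} {u : EuclideanSpace ℝ (Fin d) → ℝ}

theorem radialProfile_norm (hrad : ∀ x y, ‖x‖ = ‖y‖ → u x = u y) (i : Fin d)
    (x : EuclideanSpace ℝ (Fin d)) : radialProfile u i ‖x‖ = u x :=
  hrad _ _ (by simp [norm_smul])

theorem ContDiff.radialProfile {n : WithTop ℕ∞} (hu : ContDiff ℝ n u) (i : Fin d) :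
    ContDiff ℝ n (radialProfile u i) :=
  hu.comp (contDiff_id.smul contDiff_const)

theorem laplacian_smul_single_of_radial (hu : ContDiff ℝ 2 u)
    (hrad : ∀ x y, ‖x‖ = ‖y‖ → u x = u y) (i : Fin d) {r : ℝ} (hr : 0 < r) :
    laplacian u (r • EuclideanSpace.single i 1) =
      deriv (deriv (radialProfile u i)) r +
        ((d - 1 : ℕ) : ℝ) * (deriv (radialProfile u i) r / r) := by
  set f := radialProfile u i
  set x := r • EuclideanSpace.single i (1 : ℝ)
  have h_radial :
      iteratedFDeriv ℝ 2 u x ![EuclideanSpace.single i 1, EuclideanSpace.single i 1] =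
        deriv (deriv f) r := by
    have h_line : (fun s : ℝ => u (x + s • EuclideanSpace.single i 1)) = fun s => f (r + s) := by
      funext s
      simp only [x, f, radialProfile, add_smul]
    have h_deriv : deriv (fun s => f (r + s)) = fun s => deriv f (r + s) :=
      funext fun s => deriv_comp_const_add f r s
    rw [hu.iteratedFDeriv_two_apply_same, h_line, h_deriv, deriv_comp_const_add, add_zero]
  have h_tangential (j : Fin d) (hj : j ≠ i) :
      iteratedFDeriv ℝ 2 u x ![EuclideanSpace.single j 1, EuclideanSpace.single j 1] =
        deriv f r / r := by
    have h_line : (fun s : ℝ => u (x + s • EuclideanSpace.single j 1)) =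
        fun s => f √(r ^ 2 + s ^ 2) := by
      funext s
      rw [← radialProfile_norm hrad i, EuclideanSpace.norm_smul_single_add_smul_single hj.symm]
    rw [hu.iteratedFDeriv_two_apply_same, h_line,
      deriv_deriv_comp_sqrt_sq_add_sq (hu.radialProfile i) hr]
  rw [laplacian, ← Finset.add_sum_erase _ _ (Finset.mem_univ i), h_radial,
    Finset.sum_congr rfl fun j hj => h_tangential j (Finset.ne_of_mem_erase hj),
    Finset.sum_const, Finset.card_erase_of_mem (Finset.mem_univ i), Finset.card_univ,
    Fintype.card_fin, nsmul_eq_mul]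

end radialProfile

theorem deriv_mul_pow_eq_integral {f φ : ℝ → ℝ} {n : ℕ} (hn : n ≠ 0) (hf : ContDiff ℝ 2 f)
    (hφ : ContinuousOn φ (Ici 0))
    (hode : ∀ r, 0 < r → deriv (deriv f) r + n * (deriv f r / r) = φ r) {r : ℝ} (hr : 0 ≤ r) :
    deriv f r * r ^ n = ∫ s in (0 : ℝ)..r, s ^ n * φ s := by
  have h_deriv (s : ℝ) (hs : 0 < s) :
      HasDerivAt (fun s => deriv f s * s ^ n) (s ^ n * φ s) s := by
    refine ((hf.differentiable_deriv_two s).hasDerivAt.mul (hasDerivAt_pow n s)).congr_deriv ?_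
    rw [← hode s hs, ← pow_sub_one_mul hn s]
    field_simp
  rw [intervalIntegral.integral_eq_sub_of_hasDerivAt_of_le hr
    ((hf.continuous_deriv (by norm_num)).mul (continuous_pow n)).continuousOn
    (fun s hs => h_deriv s hs.1)
    (ContinuousOn.intervalIntegrable_of_Icc hr
      (((continuous_pow n).continuousOn.mul hφ).mono Icc_subset_Ici_self))]
  simp [hn]

theorem monotoneOn_of_deriv_mul_pow_eq_integral {f φ : ℝ → ℝ} {n : ℕ} (hf : Differentiable ℝ f)
    (hφ : ∀ s, 0 ≤ s → 0 ≤ φ s)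
    (hint : ∀ r, 0 < r → deriv f r * r ^ n = ∫ s in (0 : ℝ)..r, s ^ n * φ s) :
    MonotoneOn f (Ici 0) := by
  refine monotoneOn_of_deriv_nonneg (convex_Ici 0) hf.continuous.continuousOn
    hf.differentiableOn fun r hr => ?_
  rw [interior_Ici] at hr
  have h_nonneg : 0 ≤ deriv f r * r ^ n := by
    rw [hint r hr]
    exact intervalIntegral.integral_nonneg hr.le fun s hs =>
      mul_nonneg (pow_nonneg hs.1 n) (hφ s hs.1)
  exact nonneg_of_mul_nonneg_left h_nonneg (pow_pos hr n)

theorem ConcaveOn.abs_sub_le_of_monotoneOn {φ : ℝ → ℝ} (hconc : ConcaveOn ℝ (Ici 0) φ)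
    (hmono : MonotoneOn φ (Ici 0)) (h0 : 0 ≤ φ 0) {a b t₁ t₂ : ℝ} (ha : 0 < a)
    (ht₁ : t₁ ∈ Icc a b) (ht₂ : t₂ ∈ Icc a b) :
    |φ t₁ - φ t₂| ≤ φ b / a * |t₁ - t₂| := by
  wlog h : t₁ ≤ t₂ generalizing t₁ t₂
  · rw [abs_sub_comm, abs_sub_comm t₁]
    exact this ht₂ ht₁ (le_of_not_ge h)
  obtain rfl | hlt := h.eq_or_lt
  · simp
  have ht₁_pos : 0 < t₁ := ha.trans_le ht₁.1
  have ht₂_nonneg : (0 : ℝ) ≤ t₂ := ht₁_pos.le.trans h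
  have hb_nonneg : (0 : ℝ) ≤ b := ht₁_pos.le.trans ht₁.2
  have h_slope : (φ t₂ - φ t₁) / (t₂ - t₁) ≤ φ b / a :=
    calc (φ t₂ - φ t₁) / (t₂ - t₁)
        ≤ (φ t₁ - φ 0) / (t₁ - 0) :=
          hconc.slope_anti_adjacent self_mem_Ici ht₂_nonneg ht₁_pos hlt
      _ ≤ φ t₁ / t₁ := by rw [sub_zero]; gcongr; linarith
      _ ≤ φ b / a :=
          div_le_div₀ (h0.trans (hmono self_mem_Ici hb_nonneg hb_nonneg))
            (hmono ht₁_pos.le hb_nonneg ht₁.2) ha ht₁.1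
  rw [abs_sub_comm, abs_of_nonneg (sub_nonneg.2 (hmono ht₁_pos.le ht₂_nonneg h)),
    abs_sub_comm, abs_of_pos (sub_pos.2 hlt), ← div_le_iff₀ (sub_pos.2 hlt)]
  exact h_slope

theorem exists_abs_sub_le_mul_abs_sub_of_concaveOn {Φ : ℝ → ℝ → ℝ}
    (hΦ_cont : ContinuousOn (fun q : ℝ × ℝ => Φ q.1 q.2) (Ici 0 ×ˢ univ))
    (hΦ_nonneg : ∀ r, 0 ≤ r → ∀ t, 0 ≤ Φ r t)
    (hΦ_mono : ∀ r, 0 ≤ r → MonotoneOn (Φ r) (Ici 0))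
    (hΦ_conc : ∀ r, 0 ≤ r → ConcaveOn ℝ (Ici 0) (Φ r)) {a : ℝ} (ha : 0 < a) (R b : ℝ) :
    ∃ L, 0 ≤ L ∧ ∀ r ∈ Icc 0 R, ∀ t₁ ∈ Icc a b, ∀ t₂ ∈ Icc a b,
      |Φ r t₁ - Φ r t₂| ≤ L * |t₁ - t₂| := by
  have h_cont : ContinuousOn (fun r => Φ r b) (Icc 0 R) :=
    hΦ_cont.comp (continuous_id.prodMk continuous_const).continuousOn
      fun r hr => ⟨hr.1, mem_univ _⟩
  obtain ⟨M, hM⟩ := isCompact_Icc.bddAbove_image h_cont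
  refine ⟨max M 0 / a, by positivity, fun r hr t₁ ht₁ t₂ ht₂ => ?_⟩
  calc |Φ r t₁ - Φ r t₂|
      ≤ Φ r b / a * |t₁ - t₂| :=
        (hΦ_conc r hr.1).abs_sub_le_of_monotoneOn (hΦ_mono r hr.1) (hΦ_nonneg r hr.1 0) ha ht₁ ht₂
    _ ≤ max M 0 / a * |t₁ - t₂| := by
        gcongr
        exact le_max_of_le_left (hM ⟨r, hr, rfl⟩)

theorem eqOn_zero_of_le_mul_integral {D : ℝ → ℝ} {K R : ℝ} (hD : Continuous D)
    (hD_nonneg : ∀ r, 0 ≤ D r) (hbound : ∀ r ∈ Icc 0 R, D r ≤ K * ∫ s in (0 : ℝ)..r, D s) :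
    EqOn D 0 (Icc 0 R) := by
  have h_int_nonneg (r : ℝ) (hr : r ∈ Icc 0 R) : 0 ≤ ∫ s in (0 : ℝ)..r, D s :=
    intervalIntegral.integral_nonneg hr.1 fun s _ => hD_nonneg s
  have h_primitive : EqOn (fun r => ∫ s in (0 : ℝ)..r, D s) 0 (Icc 0 R) :=
    eq_zero_of_abs_deriv_le_mul_abs_self_of_eq_zero_right
      (fun r _ => (hD.integral_hasStrictDerivAt 0 r).hasDerivAt.continuousAt.continuousWithinAt)
      (fun r _ => (hD.integral_hasStrictDerivAt 0 r).hasDerivAt.hasDerivWithinAt)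
      (by simp) fun r hr => by
        rw [Real.norm_eq_abs, Real.norm_eq_abs, abs_of_nonneg (hD_nonneg r),
          abs_of_nonneg (h_int_nonneg r (Ico_subset_Icc_self hr))]
        exact hbound r (Ico_subset_Icc_self hr)
  intro r hr
  have h_zero : ∫ s in (0 : ℝ)..r, D s = 0 := h_primitive hr
  exact le_antisymm (by simpa [h_zero] using hbound r hr) (hD_nonneg r)

theorem abs_deriv_sub_le_mul_integral {f g φ ψ : ℝ → ℝ} {n : ℕ} {L s : ℝ} (hs : 0 < s)
    (hf_cont : Continuous f) (hg_cont : Continuous g)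
    (hφ : ContinuousOn φ (Icc 0 s)) (hψ : ContinuousOn ψ (Icc 0 s))
    (hf : deriv f s * s ^ n = ∫ t in (0 : ℝ)..s, t ^ n * φ t)
    (hg : deriv g s * s ^ n = ∫ t in (0 : ℝ)..s, t ^ n * ψ t)
    (hφψ : ∀ t ∈ Icc 0 s, |φ t - ψ t| ≤ L * |f t - g t|) :
    |deriv f s - deriv g s| ≤ L * ∫ t in (0 : ℝ)..s, |f t - g t| := by
  have h_int (χ : ℝ → ℝ) (hχ : ContinuousOn χ (Icc 0 s)) :
      IntervalIntegrable (fun t => t ^ n * χ t) volume 0 s :=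
    ((continuous_pow n).continuousOn.mul hχ).intervalIntegrable_of_Icc hs.le
  have h_diff : (deriv f s - deriv g s) * s ^ n = ∫ t in (0 : ℝ)..s, t ^ n * (φ t - ψ t) := by
    simp only [mul_sub]
    rw [intervalIntegral.integral_sub (h_int φ hφ) (h_int ψ hψ), ← hf, ← hg, sub_mul]
  have h_bound :
      |(deriv f s - deriv g s) * s ^ n| ≤ ∫ t in (0 : ℝ)..s, s ^ n * (L * |f t - g t|) := by
    rw [h_diff, ← Real.norm_eq_abs]
    have h_cont : Continuous fun t => s ^ n * (L * |f t - g t|) := by fun_prop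
    refine intervalIntegral.norm_integral_le_of_norm_le hs.le
      (Eventually.of_forall fun t ht => ?_) (h_cont.intervalIntegrable (μ := volume) 0 s)
    rw [Real.norm_eq_abs, abs_mul, abs_of_nonneg (pow_nonneg ht.1.le n)]
    exact mul_le_mul (pow_le_pow_left₀ ht.1.le ht.2 n) (hφψ t (Ioc_subset_Icc_self ht))
      (abs_nonneg _) (by positivity)
  rw [intervalIntegral.integral_const_mul, intervalIntegral.integral_const_mul, abs_mul,
    abs_of_pos (pow_pos hs n), mul_comm] at h_bound
  exact le_of_mul_le_mul_left h_bound (pow_pos hs n)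

theorem eqOn_of_deriv_mul_pow_eq_integral {Φ : ℝ → ℝ → ℝ} {n : ℕ}
    (hΦ_cont : ContinuousOn (fun q : ℝ × ℝ => Φ q.1 q.2) (Ici 0 ×ˢ univ))
    (hΦ_nonneg : ∀ r, 0 ≤ r → ∀ t, 0 ≤ Φ r t)
    (hΦ_mono : ∀ r, 0 ≤ r → MonotoneOn (Φ r) (Ici 0))
    (hΦ_conc : ∀ r, 0 ≤ r → ConcaveOn ℝ (Ici 0) (Φ r))
    {f g : ℝ → ℝ} (hf : ContDiff ℝ 1 f) (hg : ContDiff ℝ 1 g)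
    (hf_int : ∀ r, 0 < r → deriv f r * r ^ n = ∫ s in (0 : ℝ)..r, s ^ n * Φ s (f s))
    (hg_int : ∀ r, 0 < r → deriv g r * r ^ n = ∫ s in (0 : ℝ)..r, s ^ n * Φ s (g s))
    (h0 : f 0 = g 0) (h0_pos : 0 < f 0) :
    EqOn f g (Ici 0) := by
  intro R hR
  have hΦ_comp (h : ℝ → ℝ) (hh : Continuous h) : ContinuousOn (fun t => Φ t (h t)) (Icc 0 R) :=
    hΦ_cont.comp (continuous_id.prodMk hh).continuousOn fun t ht => ⟨ht.1, mem_univ _⟩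
  have hf_ge : ∀ t ∈ Ici (0 : ℝ), f 0 ≤ f t := fun t ht =>
    monotoneOn_of_deriv_mul_pow_eq_integral (hf.differentiable one_ne_zero)
      (fun s hs => hΦ_nonneg s hs _) hf_int self_mem_Ici ht ht
  have hg_ge : ∀ t ∈ Ici (0 : ℝ), f 0 ≤ g t := fun t ht => h0 ▸
    monotoneOn_of_deriv_mul_pow_eq_integral (hg.differentiable one_ne_zero)
      (fun s hs => hΦ_nonneg s hs _) hg_int self_mem_Ici ht ht
  obtain ⟨b, hb⟩ := (isCompact_Icc (a := 0) (b := R)).bddAbove_image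
    (hf.continuous.max hg.continuous).continuousOn
  obtain ⟨L, hL, hLip⟩ :=
    exists_abs_sub_le_mul_abs_sub_of_concaveOn hΦ_cont hΦ_nonneg hΦ_mono hΦ_conc h0_pos R b
  have hΦ_lip (t : ℝ) (ht : t ∈ Icc 0 R) : |Φ t (f t) - Φ t (g t)| ≤ L * |f t - g t| :=
    have h_max := max_le_iff.1 (hb ⟨t, ht, rfl⟩)
    hLip t ht _ ⟨hf_ge t ht.1, h_max.1⟩ _ ⟨hg_ge t ht.1, h_max.2⟩
  have h_deriv (s : ℝ) (hs : s ∈ Ioc 0 R) :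
      |deriv f s - deriv g s| ≤ L * ∫ t in (0 : ℝ)..s, |f t - g t| :=
    abs_deriv_sub_le_mul_integral hs.1 hf.continuous hg.continuous
      ((hΦ_comp f hf.continuous).mono (Icc_subset_Icc_right hs.2))
      ((hΦ_comp g hg.continuous).mono (Icc_subset_Icc_right hs.2))
      (hf_int s hs.1) (hg_int s hs.1)
      fun t ht => hΦ_lip t ⟨ht.1, ht.2.trans hs.2⟩
  have h_gronwall (r : ℝ) (hr : r ∈ Icc 0 R) :
      |f r - g r| ≤ R * L * ∫ s in (0 : ℝ)..r, |f s - g s| := by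
    have h_ftc : f r - g r = ∫ s in (0 : ℝ)..r, (deriv f s - deriv g s) := by
      have hf' := hf.continuous_deriv_one.intervalIntegrable (μ := volume) 0 r
      have hg' := hg.continuous_deriv_one.intervalIntegrable (μ := volume) 0 r
      rw [intervalIntegral.integral_sub hf' hg',
        intervalIntegral.integral_deriv_eq_sub (fun t _ => hf.differentiable one_ne_zero t) hf',
        intervalIntegral.integral_deriv_eq_sub (fun t _ => hg.differentiable one_ne_zero t) hg', h0]
      ring
    have h_nonneg : 0 ≤ ∫ t in (0 : ℝ)..r, |f t - g t| :=
      intervalIntegral.integral_nonneg hr.1 fun _ _ => abs_nonneg _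
    have h_deriv_le (s : ℝ) (hs : s ∈ uIoc 0 r) :
        ‖deriv f s - deriv g s‖ ≤ L * ∫ t in (0 : ℝ)..r, |f t - g t| := by
      rw [uIoc_of_le hr.1] at hs
      calc ‖deriv f s - deriv g s‖ ≤ L * ∫ t in (0 : ℝ)..s, |f t - g t| :=
            h_deriv s ⟨hs.1, hs.2.trans hr.2⟩
        _ ≤ L * ∫ t in (0 : ℝ)..r, |f t - g t| := by
            gcongr
            exact intervalIntegral.integral_mono_interval le_rfl hs.1.le hs.2
              (ae_of_all _ fun t => abs_nonneg _)
              ((hf.continuous.sub hg.continuous).abs.intervalIntegrable 0 r)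
    calc |f r - g r| = ‖∫ s in (0 : ℝ)..r, (deriv f s - deriv g s)‖ := by
          rw [h_ftc, Real.norm_eq_abs]
      _ ≤ (L * ∫ t in (0 : ℝ)..r, |f t - g t|) * |r - 0| :=
          intervalIntegral.norm_integral_le_of_norm_le_const h_deriv_le
      _ ≤ R * L * ∫ s in (0 : ℝ)..r, |f s - g s| := by
          rw [sub_zero, abs_of_nonneg hr.1, mul_comm, ← mul_assoc]
          gcongr
          exact hr.2
  have h_zero := eqOn_zero_of_le_mul_integral (by fun_prop) (fun t => abs_nonneg _) h_gronwall
    ⟨hR, le_rfl⟩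
  exact sub_eq_zero.1 (abs_eq_zero.1 h_zero)

theorem radialProfile_deriv_mul_pow_eq_integral {d : ℕ} (hd : 2 ≤ d) {Φ : ℝ → ℝ → ℝ}
    (hΦ_cont : ContinuousOn (fun q : ℝ × ℝ => Φ q.1 q.2) (Ici 0 ×ˢ univ))
    {u : EuclideanSpace ℝ (Fin d) → ℝ} (hu : ContDiff ℝ 2 u)
    (hrad : ∀ x y, ‖x‖ = ‖y‖ → u x = u y) (hsol : ∀ x, laplacian u x = Φ ‖x‖ (u x))
    (i : Fin d) {r : ℝ} (hr : 0 ≤ r) :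
    deriv (radialProfile u i) r * r ^ (d - 1) =
      ∫ s in (0 : ℝ)..r, s ^ (d - 1) * Φ s (radialProfile u i s) := by
  have h_ode (s : ℝ) (hs : 0 < s) :
      deriv (deriv (radialProfile u i)) s +
          ((d - 1 : ℕ) : ℝ) * (deriv (radialProfile u i) s / s) = Φ s (radialProfile u i s) := by
    rw [← laplacian_smul_single_of_radial hu hrad i hs, hsol]
    simp [radialProfile, norm_smul, abs_of_pos hs]
  have h_source : ContinuousOn (fun s => Φ s (radialProfile u i s)) (Ici 0) :=
    hΦ_cont.comp (continuous_id.prodMk (hu.radialProfile i).continuous).continuousOn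
      fun s hs => ⟨hs, mem_univ _⟩
  exact deriv_mul_pow_eq_integral (by omega) (hu.radialProfile i) h_source h_ode hr

theorem stmt_10_general (d : ℕ) (hd : 3 ≤ d)
    (Φ : ℝ → ℝ → ℝ)
    (hΦ_cont : ContinuousOn (fun q : ℝ × ℝ => Φ q.1 q.2) (Ici 0 ×ˢ univ))
    (hΦ_nonneg : ∀ r, 0 ≤ r → ∀ t, 0 ≤ Φ r t)
    (hΦ_mono : ∀ r, 0 ≤ r → MonotoneOn (Φ r) (Ici 0))
    (hΦ_conc : ∀ r, 0 ≤ r → ConcaveOn ℝ (Ici 0) (Φ r))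
    (u v : EuclideanSpace ℝ (Fin d) → ℝ)
    (hu_smooth : ContDiff ℝ 2 u) (hv_smooth : ContDiff ℝ 2 v)
    (hu_rad : ∀ x y, ‖x‖ = ‖y‖ → u x = u y)
    (hv_rad : ∀ x y, ‖x‖ = ‖y‖ → v x = v y)
    (hu_sol : ∀ x, laplacian u x = Φ ‖x‖ (u x))
    (hv_sol : ∀ x, laplacian v x = Φ ‖x‖ (v x))
    (h0 : u 0 = v 0) (h0pos : 0 < u 0) :
    u = v := by
  let i : Fin d := ⟨0, by omega⟩
  have h_profiles : EqOn (radialProfile u i) (radialProfile v i) (Ici 0) :=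
    eqOn_of_deriv_mul_pow_eq_integral hΦ_cont hΦ_nonneg hΦ_mono hΦ_conc
      ((hu_smooth.radialProfile i).of_le one_le_two)
      ((hv_smooth.radialProfile i).of_le one_le_two)
      (fun r hr => radialProfile_deriv_mul_pow_eq_integral (by omega) hΦ_cont hu_smooth hu_rad
        hu_sol i hr.le)
      (fun r hr => radialProfile_deriv_mul_pow_eq_integral (by omega) hΦ_cont hv_smooth hv_rad
        hv_sol i hr.le)
      (by simpa [radialProfile] using h0) (by simpa [radialProfile] using h0pos)
  funext x
  rw [← radialProfile_norm hu_rad i x, ← radialProfile_norm hv_rad i x]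
  exact h_profiles (norm_nonneg x)

theorem stmt_10 (d : ℕ) (hd : 3 ≤ d)
    (Φ : ℝ → ℝ → ℝ)
    (hΦ_cont : ContinuousOn (fun q : ℝ × ℝ => Φ q.1 q.2) (Ici 0 ×ˢ univ))
    (hΦ_nonneg : ∀ r, 0 ≤ r → ∀ t, 0 ≤ Φ r t)
    (hΦ_mono : ∀ r, 0 ≤ r → MonotoneOn (Φ r) (Ici 0))
    (hΦ_conc : ∀ r, 0 ≤ r → ConcaveOn ℝ (Ici 0) (Φ r))
    (hΦ_zero : ∀ r, 0 ≤ r → ∀ t ≤ (0 : ℝ), Φ r t = 0)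
    (u v : EuclideanSpace ℝ (Fin d) → ℝ)
    (hu_smooth : ContDiff ℝ 2 u) (hv_smooth : ContDiff ℝ 2 v)
    (hu_nonneg : ∀ x, 0 ≤ u x) (hv_nonneg : ∀ x, 0 ≤ v x)
    (hu_rad : ∀ x y, ‖x‖ = ‖y‖ → u x = u y)
    (hv_rad : ∀ x y, ‖x‖ = ‖y‖ → v x = v y)
    (hu_sol : ∀ x, laplacian u x = Φ ‖x‖ (u x))
    (hv_sol : ∀ x, laplacian v x = Φ ‖x‖ (v x))
    (h0 : u 0 = v 0) (h0pos : 0 < u 0) :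
    u = v :=
  stmt_10_general d hd Φ hΦ_cont hΦ_nonneg hΦ_mono hΦ_conc u v hu_smooth hv_smooth hu_rad hv_rad
    hu_sol hv_sol h0 h0pos
end

section
/- Let d ≥ 3, let B ⊆ ℝ^d be an open ball, x₀ ∈ B, and let φ : B̄ × ℝ → [0,∞) be continuous with φ(x,t) = 0 for t ≤ 0, such that for every x, t ↦ φ(x,t) is nondecreasing, and φ(x,t) ≤ p(x)(t+1) for all x ∈ B̄, t ≥ 0, where p : B̄ → [0,∞) is continuous. Then for every M > 0 there exists λ₀ > 0 such that for every λ ≥ λ₀, every nonnegative function u, continuous on B̄ and C² on B, satisfying Δu(x) = φ(x, u(x)) in B and u = λ on ∂B, obeys u(x₀) ≥ M. -/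
/-!
Put `v = u + 1` and `C = max (sup p) 0`; the growth bound gives `Δv ≤ C v` in the ball and
`v = λ + 1` on the sphere. For a vector `e` with `‖e‖² > C`, the barrier
`Ψ y = (λ + 1) exp (⟪e, y - a⟫ - ‖e‖ R)` satisfies `ΔΨ = ‖e‖² Ψ` and `Ψ ≤ λ + 1` on the sphere.
Where `Ψ - v` is positive, `Δ(Ψ - v) ≥ (‖e‖² - C) Ψ + C (Ψ - v) > 0`, which is impossible at an
interior maximum; hence `Ψ ≤ v` on the closed ball, and `v x₀ ≥ (λ + 1) exp (-2 ‖e‖ R)`, which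
exceeds `M + 1` once `λ` is large.
-/

open MeasureTheory Filter Set

open Topology Metric

theorem IsLocalMax.deriv_deriv_nonpos {g : ℝ → ℝ} {t : ℝ} (hmax : IsLocalMax g t)
    (hg : ContinuousAt g t) : deriv (deriv g) t ≤ 0 := by
  by_contra! hpos
  -- A positive second derivative would also make `t` a local minimum, so `g` would be
  -- locally constant near `t`.
  have hmin := isLocalMin_of_deriv_deriv_pos hpos hmax.deriv_eq_zero hg
  have hconst : g =ᶠ[𝓝 t] fun _ => g t :=
    (hmax.and hmin).mono fun s hs => le_antisymm hs.1 hs.2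
  have hzero : deriv (deriv g) t = 0 := by
    rw [hconst.deriv.deriv_eq]
    simp
  exact hpos.ne' hzero

section SecondDerivative

variable {E : Type*} [NormedAddCommGroup E] [NormedSpace ℝ E]

theorem iteratedFDeriv_two_apply_self_eq_deriv_deriv {f : E → ℝ} {x : E}
    (hf : ContDiffAt ℝ 2 f x) (v : E) :
    iteratedFDeriv ℝ 2 f x ![v, v] = deriv (deriv fun t : ℝ => f (x + t • v)) 0 := by
  have hline (t : ℝ) : HasDerivAt (fun t : ℝ => x + t • v) v t := by
    simpa using ((hasDerivAt_id t).smul_const v).const_add x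
  have hline_tendsto : Tendsto (fun t : ℝ => x + t • v) (𝓝 0) (𝓝 x) := by
    simpa using (hline 0).continuousAt.tendsto
  have hderiv : deriv (fun t : ℝ => f (x + t • v)) =ᶠ[𝓝 0]
      fun t => fderiv ℝ f (x + t • v) v := by
    filter_upwards [hline_tendsto.eventually (hf.eventually (by simp))] with t ht
    exact ((ht.differentiableAt (by norm_num)).hasFDerivAt.comp_hasDerivAt t (hline t)).deriv
  have hfderiv : HasFDerivAt (fderiv ℝ f) (fderiv ℝ (fderiv ℝ f) x) (x + (0 : ℝ) • v) := by
    rw [zero_smul, add_zero]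
    exact ((hf.fderiv_right (m := 1) (by norm_num)).differentiableAt one_ne_zero).hasFDerivAt
  have hcomp : HasDerivAt (fun t : ℝ => fderiv ℝ f (x + t • v))
      (fderiv ℝ (fderiv ℝ f) x v) 0 := hfderiv.comp_hasDerivAt 0 (hline 0)
  have hderiv2 : HasDerivAt (fun t : ℝ => fderiv ℝ f (x + t • v) v)
      (fderiv ℝ (fderiv ℝ f) x v v) 0 := by
    simpa using hcomp.clm_apply (hasDerivAt_const 0 v)
  rw [iteratedFDeriv_two_apply, hderiv.deriv_eq, hderiv2.deriv]
  simp

theorem IsLocalMax.iteratedFDeriv_two_apply_self_nonpos {f : E → ℝ} {x : E}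
    (hmax : IsLocalMax f x) (hf : ContDiffAt ℝ 2 f x) (v : E) :
    iteratedFDeriv ℝ 2 f x ![v, v] ≤ 0 := by
  have hline : Continuous fun t : ℝ => x + t • v := by fun_prop
  have hmax' : IsLocalMax f (x + (0 : ℝ) • v) := by simpa using hmax
  have hf' : ContinuousAt f (x + (0 : ℝ) • v) := by simpa using hf.continuousAt
  rw [iteratedFDeriv_two_apply_self_eq_deriv_deriv hf]
  exact (hmax'.comp_continuous (g := fun t : ℝ => x + t • v) hline.continuousAt).deriv_deriv_nonpos
    (hf'.comp (f := fun t : ℝ => x + t • v) hline.continuousAt)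

end SecondDerivative

section Laplacian

open Laplacian

variable {E : Type*} [NormedAddCommGroup E] [InnerProductSpace ℝ E]

theorem laplacian_eq_innerProductSpace_laplacian {d : ℕ} (u : EuclideanSpace ℝ (Fin d) → ℝ)
    (x : EuclideanSpace ℝ (Fin d)) : _root_.laplacian u x = Δ u x := by
  rw [InnerProductSpace.laplacian_eq_iteratedFDeriv_orthonormalBasis u
    (EuclideanSpace.basisFun (Fin d) ℝ)]
  simp [_root_.laplacian, EuclideanSpace.basisFun_apply]

theorem contDiff_mul_exp_inner_add (c β : ℝ) (e : E) :
    ContDiff ℝ 2 fun y => c * Real.exp (inner ℝ e y + β) :=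
  contDiff_const.mul ((contDiff_const.inner ℝ contDiff_id).add contDiff_const).exp

variable [FiniteDimensional ℝ E]

theorem IsLocalMax.laplacian_nonpos {f : E → ℝ} {x : E} (hmax : IsLocalMax f x)
    (hf : ContDiffAt ℝ 2 f x) : Δ f x ≤ 0 := by
  rw [InnerProductSpace.laplacian_eq_iteratedFDeriv_stdOrthonormalBasis]
  exact Finset.sum_nonpos fun i _ => hmax.iteratedFDeriv_two_apply_self_nonpos hf _

theorem laplacian_mul_exp_inner_add (c β : ℝ) (e x : E) :
    Δ (fun y => c * Real.exp (inner ℝ e y + β)) x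
      = ‖e‖ ^ 2 * (c * Real.exp (inner ℝ e x + β)) := by
  have hline (v : E) : (fun t : ℝ => c * Real.exp (inner ℝ e (x + t • v) + β))
      = fun t => c * Real.exp (inner ℝ e v * t + (inner ℝ e x + β)) := by
    funext t
    rw [inner_add_right, inner_smul_right]
    ring_nf
  have hderiv (k A a : ℝ) : deriv (fun t : ℝ => a * Real.exp (k * t + A))
      = fun t => k * a * Real.exp (k * t + A) := by
    funext t
    have h : HasDerivAt (fun t : ℝ => a * Real.exp (k * t + A))
        (a * (Real.exp (k * t + A) * (k * 1))) t :=
      (((hasDerivAt_id t).const_mul k).add_const A).exp.const_mul a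
    rw [h.deriv]
    ring
  have hderiv2 (k A : ℝ) : deriv (deriv fun t : ℝ => c * Real.exp (k * t + A)) 0
      = k ^ 2 * (c * Real.exp A) := by
    rw [hderiv, hderiv]
    simp
    ring
  let b := stdOrthonormalBasis ℝ E
  rw [InnerProductSpace.laplacian_eq_iteratedFDeriv_orthonormalBasis _ b]
  simp only [iteratedFDeriv_two_apply_self_eq_deriv_deriv
    (contDiff_mul_exp_inner_add c β e).contDiffAt, hline, hderiv2]
  rw [← Finset.sum_mul, ← real_inner_self_eq_norm_sq, ← b.sum_inner_mul_inner e e]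
  simp only [sq, real_inner_comm e]

theorem nonpos_of_laplacian_pos {K U : Set E} {w : E → ℝ} (hK : IsCompact K) (hU : IsOpen U)
    (hUK : U ⊆ K) (hw : ContinuousOn w K) (hw₂ : ContDiffOn ℝ 2 w U)
    (hbdry : ∀ x ∈ K \ U, w x ≤ 0) (hΔ : ∀ x ∈ U, 0 < w x → 0 < Δ w x) :
    ∀ x ∈ K, w x ≤ 0 := by
  intro x hx
  obtain ⟨z, hzK, hzmax⟩ := hK.exists_isMaxOn ⟨x, hx⟩ hw
  refine (hzmax hx).trans (not_lt.1 fun hpos => ?_)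
  have hzU : z ∈ U := by
    by_contra hzU
    exact (hbdry z ⟨hzK, hzU⟩).not_gt hpos
  have hloc : IsLocalMax w z := hzmax.isLocalMax (mem_of_superset (hU.mem_nhds hzU) hUK)
  exact (hloc.laplacian_nonpos (hw₂.contDiffAt (hU.mem_nhds hzU))).not_gt (hΔ z hzU hpos)

theorem laplacian_add_const {f : E → ℝ} {x : E} (hf : ContDiffAt ℝ 2 f x) (b : ℝ) :
    Δ (fun y => f y + b) x = Δ f x := by
  rw [show (fun y => f y + b) = f + fun _ => b from rfl, hf.laplacian_add contDiffAt_const,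
    InnerProductSpace.laplacian_const, Pi.zero_apply, add_zero]

theorem mul_exp_inner_sub_le_of_laplacian_le {v : E → ℝ} {a e : E} {R c C : ℝ} (hc : 0 < c)
    (hC : 0 ≤ C) (he : C < ‖e‖ ^ 2) (hv : ContinuousOn v (closedBall a R))
    (hv₂ : ContDiffOn ℝ 2 v (ball a R)) (hΔv : ∀ x ∈ ball a R, Δ v x ≤ C * v x)
    (hbdry : ∀ x ∈ sphere a R, c ≤ v x) :
    ∀ y ∈ closedBall a R, c * Real.exp (inner ℝ e (y - a) - ‖e‖ * R) ≤ v y := by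
  set β := -inner ℝ e a - ‖e‖ * R
  set Ψ : E → ℝ := fun y => c * Real.exp (inner ℝ e y + β)
  have hΨ : ContDiff ℝ 2 Ψ := contDiff_mul_exp_inner_add c β e
  have hΨ_eq (y : E) : Ψ y = c * Real.exp (inner ℝ e (y - a) - ‖e‖ * R) := by
    simp only [Ψ, β, inner_sub_right]
    ring_nf
  have hw_bdry : ∀ x ∈ closedBall a R \ ball a R, (Ψ - v) x ≤ 0 := by
    rintro x ⟨hx, hx'⟩
    have hxs : x ∈ sphere a R := mem_sphere.2 (le_antisymm hx (not_lt.1 hx'))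
    have hexp : inner ℝ e (x - a) - ‖e‖ * R ≤ 0 := by
      have := real_inner_le_norm e (x - a)
      rw [← dist_eq_norm, mem_sphere.1 hxs] at this
      linarith
    have hΨc : Ψ x ≤ c := by
      rw [hΨ_eq]
      exact mul_le_of_le_one_right hc.le (Real.exp_le_one_iff.2 hexp)
    simpa using hΨc.trans (hbdry x hxs)
  have hw_laplacian : ∀ x ∈ ball a R, 0 < (Ψ - v) x → 0 < Δ (Ψ - v) x := by
    intro x hx hpos
    have hΔw : Δ (Ψ - v) x = ‖e‖ ^ 2 * Ψ x - Δ v x := by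
      rw [hΨ.contDiffAt.laplacian_sub (hv₂.contDiffAt (isOpen_ball.mem_nhds hx)),
        laplacian_mul_exp_inner_add]
    have hΨpos : 0 < Ψ x := by positivity
    rw [Pi.sub_apply, sub_pos] at hpos
    -- `‖e‖² Ψ - C v = (‖e‖² - C) Ψ + C (Ψ - v)` with both terms positive
    nlinarith [hΔv x hx]
  intro y hy
  have hw := nonpos_of_laplacian_pos (isCompact_closedBall a R) isOpen_ball
    ball_subset_closedBall (hΨ.continuous.continuousOn.sub hv) (hΨ.contDiffOn.sub hv₂)
    hw_bdry hw_laplacian y hy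
  rw [Pi.sub_apply, sub_nonpos, hΨ_eq] at hw
  exact hw

theorem mul_exp_le_of_laplacian_le {v : E → ℝ} {a e : E} {R c C : ℝ} (hc : 0 < c)
    (hC : 0 ≤ C) (he : C < ‖e‖ ^ 2) (hv : ContinuousOn v (closedBall a R))
    (hv₂ : ContDiffOn ℝ 2 v (ball a R)) (hΔv : ∀ x ∈ ball a R, Δ v x ≤ C * v x)
    (hbdry : ∀ x ∈ sphere a R, c ≤ v x) :
    ∀ y ∈ closedBall a R, c * Real.exp (-(2 * ‖e‖ * R)) ≤ v y := by
  intro y hy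
  refine le_trans ?_ (mul_exp_inner_sub_le_of_laplacian_le hc hC he hv hv₂ hΔv hbdry y hy)
  have hinner : -(‖e‖ * R) ≤ inner ℝ e (y - a) := calc
    -(‖e‖ * R) ≤ -(‖e‖ * ‖y - a‖) := by
      gcongr
      exact mem_closedBall_iff_norm.1 hy
    _ ≤ inner ℝ e (y - a) := neg_le_of_abs_le (abs_real_inner_le_norm e (y - a))
  gcongr
  linarith

end Laplacian

theorem stmt_12_general (d : ℕ) (hd : 3 ≤ d)
    (a : EuclideanSpace ℝ (Fin d)) (R : ℝ)
    (x₀ : EuclideanSpace ℝ (Fin d)) (hx₀ : x₀ ∈ Metric.ball a R)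
    (φ : EuclideanSpace ℝ (Fin d) → ℝ → ℝ)
    (p : EuclideanSpace ℝ (Fin d) → ℝ)
    (hp_cont : ContinuousOn p (Metric.closedBall a R))
    (hφ_growth : ∀ x ∈ Metric.closedBall a R, ∀ t, 0 ≤ t → φ x t ≤ p x * (t + 1)) :
    ∀ M > (0 : ℝ), ∃ lam₀ > (0 : ℝ), ∀ lam, lam₀ ≤ lam →
      ∀ u : EuclideanSpace ℝ (Fin d) → ℝ,
        ContinuousOn u (Metric.closedBall a R) →
        ContDiffOn ℝ 2 u (Metric.ball a R) →
        (∀ x ∈ Metric.closedBall a R, 0 ≤ u x) →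
        (∀ x ∈ Metric.ball a R, laplacian u x = φ x (u x)) →
        (∀ x ∈ Metric.sphere a R, u x = lam) →
        M ≤ u x₀ := by
  intro M hM
  obtain ⟨C, hC, hpC⟩ : ∃ C, 0 ≤ C ∧ ∀ x ∈ closedBall a R, p x ≤ C := by
    obtain ⟨C, hC⟩ := (isCompact_closedBall a R).bddAbove_image hp_cont
    exact ⟨max C 0, le_max_right C 0,
      fun x hx => (hC (mem_image_of_mem p hx)).trans (le_max_left C 0)⟩
  set e : EuclideanSpace ℝ (Fin d) := EuclideanSpace.single ⟨0, by omega⟩ (C + 1)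
  have he : C < ‖e‖ ^ 2 := by
    simp only [e, PiLp.norm_single, Real.norm_eq_abs, sq_abs]
    nlinarith
  set ε := Real.exp (-(2 * ‖e‖ * R))
  have hε : 0 < ε := Real.exp_pos _
  refine ⟨(M + 1) / ε, by positivity, fun lam hlam u hu hu₂ hu_nonneg hΔu hu_bdry => ?_⟩
  have hlamε : M + 1 ≤ lam * ε := (div_le_iff₀ hε).1 hlam
  have hlower : (lam + 1) * ε ≤ u x₀ + 1 := by
    refine mul_exp_le_of_laplacian_le (v := fun y => u y + 1) (by nlinarith) hC he
      (hu.add continuousOn_const) (hu₂.add contDiffOn_const) (fun x hx => ?_)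
      (fun x hx => by rw [hu_bdry x hx]) x₀ (ball_subset_closedBall hx₀)
    have hx' := ball_subset_closedBall hx
    rw [laplacian_add_const (hu₂.contDiffAt (isOpen_ball.mem_nhds hx)),
      ← laplacian_eq_innerProductSpace_laplacian, hΔu x hx]
    exact (hφ_growth x hx' _ (hu_nonneg x hx')).trans
      (mul_le_mul_of_nonneg_right (hpC x hx') (by linarith [hu_nonneg x hx']))
  linarith [add_one_mul lam ε]

theorem stmt_12 (d : ℕ) (hd : 3 ≤ d)
    (a : EuclideanSpace ℝ (Fin d)) (R : ℝ) (hR : 0 < R)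
    (x₀ : EuclideanSpace ℝ (Fin d)) (hx₀ : x₀ ∈ Metric.ball a R)
    (φ : EuclideanSpace ℝ (Fin d) → ℝ → ℝ)
    (p : EuclideanSpace ℝ (Fin d) → ℝ)
    (hφ_cont : ContinuousOn (fun q : EuclideanSpace ℝ (Fin d) × ℝ => φ q.1 q.2)
      (Metric.closedBall a R ×ˢ univ))
    (hφ_nonneg : ∀ x ∈ Metric.closedBall a R, ∀ t, 0 ≤ φ x t)
    (hφ_mono : ∀ x ∈ Metric.closedBall a R, Monotone (φ x))
    (hφ_zero : ∀ x ∈ Metric.closedBall a R, ∀ t ≤ (0 : ℝ), φ x t = 0)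
    (hp_cont : ContinuousOn p (Metric.closedBall a R))
    (hp_nonneg : ∀ x ∈ Metric.closedBall a R, 0 ≤ p x)
    (hφ_growth : ∀ x ∈ Metric.closedBall a R, ∀ t, 0 ≤ t → φ x t ≤ p x * (t + 1)) :
    ∀ M > (0 : ℝ), ∃ lam₀ > (0 : ℝ), ∀ lam, lam₀ ≤ lam →
      ∀ u : EuclideanSpace ℝ (Fin d) → ℝ,
        ContinuousOn u (Metric.closedBall a R) →
        ContDiffOn ℝ 2 u (Metric.ball a R) →
        (∀ x ∈ Metric.closedBall a R, 0 ≤ u x) →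
        (∀ x ∈ Metric.ball a R, laplacian u x = φ x (u x)) →
        (∀ x ∈ Metric.sphere a R, u x = lam) →
        M ≤ u x₀ :=
  stmt_12_general d hd a R x₀ hx₀ φ p hp_cont hφ_growth
end

section
/- Let n ≥ 3 be an integer and Q > 0 a real number. For r > 0 define G(r) = ∫₀^∞ t^{−3/2} (1+r) (1 + (1+r)/t)^{(n−3)/2} exp(−Q²t/4 − Qr/2 − r²/(4t)) dt. Then there exist constants 0 < c ≤ C such that c·e^{−Qr} ≤ G(r) ≤ C·e^{−Qr} for all r ≥ 1. -/
open MeasureTheory Real Set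

/-!
Since `-Q²t/4 - Qr/2 - r²/(4t) = -Qr - (Qt - r)²/(4t)`, the integral is `(1 + r) e^{-Qr}` times an
integral of the inverse-Gaussian kernel `t^{-3/2} exp(-c (a t - b)²/t)` (with `a = Q`, `b = r`)
against the weight `(1 + (1 + r)/t)^m ≥ 1`. The substitution `t = u⁻²` turns the kernel integral
into `2 ∫ exp(-c (b u - a/u)²) du`; as `u ↦ b u - a/u` is increasing with derivative
`b + a/u² ≥ b`, the Gaussian integral bounds this by `2 √(π/c) / b`, while the interval of length
`1/(2b)` to the right of its zero `√(a/b)` gives the lower bound `exp(-c) / b`. So the kernel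
integral is of order `1/r`, which cancels `1 + r`. For the upper bound, half of the Gaussian factor
absorbs the weight: for `r ≥ 1`, `(Qt - r)²/(8t) ≥ (1 + r)/(16t) - Q/4`, and `(1 + x)^m e^{-x/16}`
is bounded on `x ≥ 0`.
-/

section InverseGaussian

variable {a b c : ℝ}

lemma strictMonoOn_mul_sub_div (ha : 0 ≤ a) (hb : 0 < b) :
    StrictMonoOn (fun u => b * u - a / u) (Ioi 0) := by
  intro u (hu : 0 < u) v _ huv
  have : a / v ≤ a / u := div_le_div_of_nonneg_left ha hu huv.le
  dsimp only
  nlinarith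

lemma hasDerivAt_mul_sub_div {u : ℝ} (hu : u ≠ 0) :
    HasDerivAt (fun u => b * u - a / u) (b + a / u ^ 2) u := by
  have h : HasDerivAt (fun u => b * u - a * u⁻¹) (b * 1 - a * -(u ^ 2)⁻¹) u :=
    ((hasDerivAt_id u).const_mul b).sub ((hasDerivAt_inv hu).const_mul a)
  simpa only [div_eq_mul_inv, mul_one, mul_neg, sub_neg_eq_add] using h

lemma integrableOn_add_div_sq_mul_exp (ha : 0 ≤ a) (hb : 0 < b) (hc : 0 < c) :
    IntegrableOn (fun u => (b + a / u ^ 2) * exp (-c * (b * u - a / u) ^ 2)) (Ioi 0) := by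
  have h := integrableOn_image_iff_integrableOn_abs_deriv_smul measurableSet_Ioi
    (fun u hu => (hasDerivAt_mul_sub_div (a := a) (b := b) (ne_of_gt hu)).hasDerivWithinAt)
    (strictMonoOn_mul_sub_div ha hb).injOn (fun y => exp (-c * y ^ 2))
  refine (integrableOn_congr_fun (fun u (hu : 0 < u) => ?_) measurableSet_Ioi).mp
    (h.mp (integrable_exp_neg_mul_sq hc).integrableOn)
  rw [abs_of_pos (by positivity), smul_eq_mul]

lemma integral_add_div_sq_mul_exp_le (ha : 0 ≤ a) (hb : 0 < b) (hc : 0 < c) :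
    ∫ u in Ioi 0, (b + a / u ^ 2) * exp (-c * (b * u - a / u) ^ 2) ≤ √(π / c) := by
  have h := integral_image_eq_integral_abs_deriv_smul measurableSet_Ioi
    (fun u hu => (hasDerivAt_mul_sub_div (a := a) (b := b) (ne_of_gt hu)).hasDerivWithinAt)
    (strictMonoOn_mul_sub_div ha hb).injOn (fun y => exp (-c * y ^ 2))
  calc ∫ u in Ioi 0, (b + a / u ^ 2) * exp (-c * (b * u - a / u) ^ 2)
      = ∫ y in (fun u => b * u - a / u) '' Ioi 0, exp (-c * y ^ 2) := by
        rw [h]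
        refine setIntegral_congr_fun measurableSet_Ioi fun u (hu : 0 < u) => ?_
        rw [abs_of_pos (by positivity), smul_eq_mul]
    _ ≤ ∫ y, exp (-c * y ^ 2) :=
        setIntegral_le_integral (integrable_exp_neg_mul_sq hc) (ae_of_all _ fun _ => (exp_pos _).le)
    _ = √(π / c) := integral_gaussian c

lemma rpow_neg_two_substitution {u : ℝ} (hu : 0 < u) :
    (|(-2 : ℝ)| * u ^ ((-2 : ℝ) - 1)) •
        ((u ^ (-2 : ℝ)) ^ (-(3 : ℝ) / 2) * exp (-c * (a * u ^ (-2 : ℝ) - b) ^ 2 / u ^ (-2 : ℝ))) =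
      2 * exp (-c * (b * u - a / u) ^ 2) := by
  have hpow : (u ^ (-2 : ℝ)) ^ (-(3 : ℝ) / 2) = u ^ (3 : ℝ) := by
    rw [← rpow_mul hu.le]; norm_num
  have hexp : -c * (a * u ^ (-2 : ℝ) - b) ^ 2 / u ^ (-2 : ℝ) = -c * (b * u - a / u) ^ 2 := by
    rw [rpow_neg hu.le, rpow_two]
    field_simp
    ring
  rw [hpow, hexp, smul_eq_mul, ← mul_assoc, mul_assoc _ (u ^ ((-2 : ℝ) - 1)), ← rpow_add hu]
  norm_num

lemma integral_rpow_mul_exp_eq :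
    ∫ t in Ioi 0, t ^ (-(3 : ℝ) / 2) * exp (-c * (a * t - b) ^ 2 / t) =
      2 * ∫ u in Ioi 0, exp (-c * (b * u - a / u) ^ 2) := by
  rw [← integral_comp_rpow_Ioi _ (by norm_num : (-2 : ℝ) ≠ 0), ← integral_const_mul]
  exact setIntegral_congr_fun measurableSet_Ioi fun u hu => rpow_neg_two_substitution hu

lemma integrableOn_rpow_mul_exp_iff :
    IntegrableOn (fun t => t ^ (-(3 : ℝ) / 2) * exp (-c * (a * t - b) ^ 2 / t)) (Ioi 0) ↔
      IntegrableOn (fun u => exp (-c * (b * u - a / u) ^ 2)) (Ioi 0) := by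
  rw [← integrableOn_Ioi_comp_rpow_iff _ (by norm_num : (-2 : ℝ) ≠ 0),
    integrableOn_congr_fun (fun u (hu : u ∈ Ioi 0) => rpow_neg_two_substitution (a := a) (b := b)
      (c := c) hu) measurableSet_Ioi]
  exact integrable_const_mul_iff (isUnit_iff_ne_zero.mpr two_ne_zero) _

lemma integrableOn_exp_mul_sub_div_sq (ha : 0 ≤ a) (hb : 0 < b) (hc : 0 < c) :
    IntegrableOn (fun u => exp (-c * (b * u - a / u) ^ 2)) (Ioi 0) := by
  refine ((integrableOn_add_div_sq_mul_exp ha hb hc).const_mul b⁻¹).mono'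
    (by fun_prop : Measurable _).aestronglyMeasurable ?_
  filter_upwards [ae_restrict_mem measurableSet_Ioi] with u (hu : 0 < u)
  rw [norm_of_nonneg (exp_pos _).le, ← mul_assoc, inv_mul_eq_div, add_div, div_self hb.ne']
  exact le_mul_of_one_le_left (exp_pos _).le (le_add_of_nonneg_right (by positivity))

lemma integral_exp_mul_sub_div_sq_le (ha : 0 ≤ a) (hb : 0 < b) (hc : 0 < c) :
    ∫ u in Ioi 0, exp (-c * (b * u - a / u) ^ 2) ≤ √(π / c) / b := by
  rw [le_div_iff₀ hb, ← integral_mul_const]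
  refine (setIntegral_mono_on ((integrableOn_exp_mul_sub_div_sq ha hb hc).mul_const b)
    (integrableOn_add_div_sq_mul_exp ha hb hc) measurableSet_Ioi fun u (hu : 0 < u) => ?_).trans
    (integral_add_div_sq_mul_exp_le ha hb hc)
  rw [mul_comm]
  exact mul_le_mul_of_nonneg_right (le_add_of_nonneg_right (by positivity)) (exp_pos _).le

lemma exp_neg_div_le_integral_exp_mul_sub_div_sq (ha : 0 ≤ a) (hb : 0 < b) (hc : 0 < c) :
    exp (-c) / (2 * b) ≤ ∫ u in Ioi 0, exp (-c * (b * u - a / u) ^ 2) := by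
  set u₀ := √(a / b)
  have hu₀ : b * u₀ ^ 2 = a := by
    rw [sq_sqrt (div_nonneg ha hb.le)]; field_simp
  have hwindow : ∀ u ∈ Ioc u₀ (u₀ + 1 / (2 * b)), exp (-c) ≤ exp (-c * (b * u - a / u) ^ 2) := by
    rintro u ⟨hlo, hhi⟩
    have hu : 0 < u := (sqrt_nonneg _).trans_lt hlo
    have hφ : b * u - a / u = (b * u ^ 2 - a) / u := by field_simp
    have hsq : u₀ ^ 2 ≤ u ^ 2 := pow_le_pow_left₀ (sqrt_nonneg _) hlo.le 2
    have hφ₀ : 0 ≤ b * u - a / u := by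
      rw [hφ]; exact div_nonneg (by nlinarith) hu.le
    have hφ₁ : b * u - a / u ≤ 1 := by
      have hstep : b * (u - u₀) ≤ 1 / 2 :=
        calc b * (u - u₀) ≤ b * (1 / (2 * b)) := mul_le_mul_of_nonneg_left (by linarith) hb.le
          _ = 1 / 2 := by field_simp
      rw [hφ, div_le_one hu]
      nlinarith [mul_le_mul_of_nonneg_right hstep (by linarith [sqrt_nonneg (a / b)] : 0 ≤ u + u₀)]
    rw [exp_le_exp]
    nlinarith [pow_le_one₀ hφ₀ hφ₁ (n := 2)]
  calc exp (-c) / (2 * b) = exp (-c) * volume.real (Ioc u₀ (u₀ + 1 / (2 * b))) := by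
        rw [Real.volume_real_Ioc_of_le (le_add_of_nonneg_right (by positivity))]; ring
    _ ≤ ∫ u in Ioc u₀ (u₀ + 1 / (2 * b)), exp (-c * (b * u - a / u) ^ 2) :=
        setIntegral_ge_of_const_le_real measurableSet_Ioc measure_Ioc_lt_top.ne hwindow
          ((integrableOn_exp_mul_sub_div_sq ha hb hc).mono_set
            fun u hu => (sqrt_nonneg _).trans_lt hu.1)
    _ ≤ ∫ u in Ioi 0, exp (-c * (b * u - a / u) ^ 2) :=
        setIntegral_mono_set (integrableOn_exp_mul_sub_div_sq ha hb hc)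
          (ae_of_all _ fun _ => (exp_pos _).le)
          (Filter.Eventually.of_forall fun u hu => (sqrt_nonneg _).trans_lt hu.1)

theorem integrableOn_rpow_mul_exp (ha : 0 ≤ a) (hb : 0 < b) (hc : 0 < c) :
    IntegrableOn (fun t => t ^ (-(3 : ℝ) / 2) * exp (-c * (a * t - b) ^ 2 / t)) (Ioi 0) :=
  integrableOn_rpow_mul_exp_iff.mpr (integrableOn_exp_mul_sub_div_sq ha hb hc)

theorem integral_rpow_mul_exp_le (ha : 0 ≤ a) (hb : 0 < b) (hc : 0 < c) :
    ∫ t in Ioi 0, t ^ (-(3 : ℝ) / 2) * exp (-c * (a * t - b) ^ 2 / t) ≤ 2 * √(π / c) / b := by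
  rw [integral_rpow_mul_exp_eq, mul_div_assoc]
  exact mul_le_mul_of_nonneg_left (integral_exp_mul_sub_div_sq_le ha hb hc) zero_le_two

theorem exp_neg_div_le_integral_rpow_mul_exp (ha : 0 ≤ a) (hb : 0 < b) (hc : 0 < c) :
    exp (-c) / b ≤ ∫ t in Ioi 0, t ^ (-(3 : ℝ) / 2) * exp (-c * (a * t - b) ^ 2 / t) := by
  rw [integral_rpow_mul_exp_eq]
  have := exp_neg_div_le_integral_exp_mul_sub_div_sq ha hb hc
  rw [mul_comm 2 b, ← div_div, div_le_iff₀ two_pos] at this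
  linarith

end InverseGaussian

lemma one_add_rpow_mul_exp_neg_le {m c x : ℝ} (hm : 0 ≤ m) (hc : 0 < c) (hx : 0 ≤ x) :
    (1 + x) ^ m * exp (-(c * x)) ≤ (1 + m / c) ^ m := by
  set l := 1 + m / c
  have hl : 1 ≤ l := le_add_of_nonneg_right (by positivity)
  have hbase : 1 + x ≤ l * exp (x / l) :=
    calc 1 + x ≤ l * (x / l + 1) := by
          rw [mul_add, mul_div_cancel₀ _ (by positivity)]; linarith
      _ ≤ l * exp (x / l) := mul_le_mul_of_nonneg_left (add_one_le_exp _) (by positivity)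
  have hrate : m / l ≤ c := by
    rw [div_le_iff₀ (by positivity)]
    simp only [l, mul_add, mul_div_cancel₀ _ hc.ne']
    linarith
  calc (1 + x) ^ m * exp (-(c * x)) ≤ (l * exp (x / l)) ^ m * exp (-(c * x)) := by
        gcongr
    _ = l ^ m * exp ((m / l - c) * x) := by
        rw [mul_rpow (by positivity) (exp_pos _).le, ← exp_mul, mul_assoc, ← exp_add]
        ring_nf
    _ ≤ l ^ m := by
        refine mul_le_of_le_one_right (by positivity) (exp_le_one_iff.mpr ?_)
        exact mul_nonpos_of_nonpos_of_nonneg (by linarith) hx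

noncomputable def greenIntegrand (m Q r t : ℝ) : ℝ :=
  t ^ (-(3 : ℝ) / 2) * (1 + r) * (1 + (1 + r) / t) ^ m *
    exp (-Q ^ 2 * t / 4 - Q * r / 2 - r ^ 2 / (4 * t))

section GreenIntegrand

variable {m Q r t : ℝ}

lemma greenIntegrand_eq (ht : t ≠ 0) :
    greenIntegrand m Q r t = (1 + r) * exp (-Q * r) * (1 + (1 + r) / t) ^ m *
      (t ^ (-(3 : ℝ) / 2) * exp (-(1 / 4) * (Q * t - r) ^ 2 / t)) := by
  have hexp : -Q ^ 2 * t / 4 - Q * r / 2 - r ^ 2 / (4 * t) =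
      -Q * r + -(1 / 4) * (Q * t - r) ^ 2 / t := by
    field_simp; ring
  rw [greenIntegrand, hexp, exp_add]
  ring

lemma one_add_div_rpow_mul_exp_le (hm : 0 ≤ m) (hr : 1 ≤ r) (ht : 0 < t) :
    (1 + (1 + r) / t) ^ m * exp (-(1 / 8) * (Q * t - r) ^ 2 / t) ≤
      exp (Q / 4) * (1 + 16 * m) ^ m := by
  have hgauss : -(1 / 8) * (Q * t - r) ^ 2 / t ≤ Q / 4 + -(1 / 16 * ((1 + r) / t)) := by
    rw [← sub_nonneg]
    have : Q / 4 + -(1 / 16 * ((1 + r) / t)) - -(1 / 8) * (Q * t - r) ^ 2 / t =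
        (2 * (Q * t - (r - 1)) ^ 2 + 3 * (r - 1)) / (16 * t) := by
      field_simp; ring
    rw [this]
    exact div_nonneg (by nlinarith [sq_nonneg (Q * t - (r - 1))]) (by positivity)
  calc (1 + (1 + r) / t) ^ m * exp (-(1 / 8) * (Q * t - r) ^ 2 / t)
      ≤ (1 + (1 + r) / t) ^ m * (exp (Q / 4) * exp (-(1 / 16 * ((1 + r) / t)))) := by
        rw [← exp_add]; gcongr
    _ = exp (Q / 4) * ((1 + (1 + r) / t) ^ m * exp (-(1 / 16 * ((1 + r) / t)))) := by ring
    _ ≤ exp (Q / 4) * (1 + 16 * m) ^ m := by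
        have h := one_add_rpow_mul_exp_neg_le hm (by norm_num : (0 : ℝ) < 1 / 16)
          (by positivity : 0 ≤ (1 + r) / t)
        rw [show m / (1 / 16) = 16 * m by ring] at h
        exact mul_le_mul_of_nonneg_left h (exp_pos _).le

lemma greenIntegrand_le (hm : 0 ≤ m) (hr : 1 ≤ r) (ht : 0 < t) :
    greenIntegrand m Q r t ≤ (1 + r) * exp (-Q * r) * (exp (Q / 4) * (1 + 16 * m) ^ m) *
      (t ^ (-(3 : ℝ) / 2) * exp (-(1 / 8) * (Q * t - r) ^ 2 / t)) := by
  have hsplit : exp (-(1 / 4) * (Q * t - r) ^ 2 / t) =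
      exp (-(1 / 8) * (Q * t - r) ^ 2 / t) * exp (-(1 / 8) * (Q * t - r) ^ 2 / t) := by
    rw [← exp_add]; ring_nf
  calc greenIntegrand m Q r t
      = (1 + r) * exp (-Q * r) * ((1 + (1 + r) / t) ^ m * exp (-(1 / 8) * (Q * t - r) ^ 2 / t)) *
          (t ^ (-(3 : ℝ) / 2) * exp (-(1 / 8) * (Q * t - r) ^ 2 / t)) := by
        rw [greenIntegrand_eq ht.ne', hsplit]; ring
    _ ≤ _ := mul_le_mul_of_nonneg_right (mul_le_mul_of_nonneg_left
          (one_add_div_rpow_mul_exp_le hm hr ht) (by positivity)) (by positivity)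

lemma le_greenIntegrand (hm : 0 ≤ m) (hr : 0 ≤ r) (ht : 0 < t) :
    (1 + r) * exp (-Q * r) * (t ^ (-(3 : ℝ) / 2) * exp (-(1 / 4) * (Q * t - r) ^ 2 / t)) ≤
      greenIntegrand m Q r t := by
  rw [greenIntegrand_eq ht.ne']
  have : 1 ≤ (1 + (1 + r) / t) ^ m :=
    one_le_rpow (le_add_of_nonneg_right (by positivity)) hm
  exact mul_le_mul_of_nonneg_right (le_mul_of_one_le_right (by positivity) this) (by positivity)

lemma integrableOn_greenIntegrand (hm : 0 ≤ m) (hQ : 0 ≤ Q) (hr : 1 ≤ r) :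
    IntegrableOn (greenIntegrand m Q r) (Ioi 0) := by
  refine (((integrableOn_rpow_mul_exp hQ (by linarith) (by norm_num : (0 : ℝ) < 1 / 8)).const_mul
    ((1 + r) * exp (-Q * r) * (exp (Q / 4) * (1 + 16 * m) ^ m)))).mono'
    (by unfold greenIntegrand; fun_prop : Measurable _).aestronglyMeasurable ?_
  filter_upwards [ae_restrict_mem measurableSet_Ioi] with t (ht : 0 < t)
  rw [norm_of_nonneg ((le_greenIntegrand hm (by linarith) ht).trans' (by positivity))]
  exact greenIntegrand_le hm hr ht

theorem integral_greenIntegrand_le (hm : 0 ≤ m) (hQ : 0 ≤ Q) (hr : 1 ≤ r) :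
    ∫ t in Ioi 0, greenIntegrand m Q r t ≤
      4 * √(8 * π) * exp (Q / 4) * (1 + 16 * m) ^ m * exp (-Q * r) := by
  have hr₀ : 0 < r := by linarith
  have hK := integral_rpow_mul_exp_le hQ hr₀ (by norm_num : (0 : ℝ) < 1 / 8)
  rw [show π / (1 / 8) = 8 * π by ring] at hK
  calc ∫ t in Ioi 0, greenIntegrand m Q r t
      ≤ ∫ t in Ioi 0, (1 + r) * exp (-Q * r) * (exp (Q / 4) * (1 + 16 * m) ^ m) *
          (t ^ (-(3 : ℝ) / 2) * exp (-(1 / 8) * (Q * t - r) ^ 2 / t)) :=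
        setIntegral_mono_on (integrableOn_greenIntegrand hm hQ hr)
          ((integrableOn_rpow_mul_exp hQ hr₀ (by norm_num)).const_mul _) measurableSet_Ioi
          fun t ht => greenIntegrand_le hm hr ht
    _ ≤ (1 + r) * exp (-Q * r) * (exp (Q / 4) * (1 + 16 * m) ^ m) * (2 * √(8 * π) / r) := by
        rw [integral_const_mul]; gcongr
    _ = (1 + r) / r * (2 * √(8 * π) * exp (Q / 4) * (1 + 16 * m) ^ m * exp (-Q * r)) := by ring
    _ ≤ 2 * (2 * √(8 * π) * exp (Q / 4) * (1 + 16 * m) ^ m * exp (-Q * r)) := by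
        gcongr
        rw [div_le_iff₀ hr₀]; linarith
    _ = _ := by ring

theorem exp_neg_mul_le_integral_greenIntegrand (hm : 0 ≤ m) (hQ : 0 ≤ Q) (hr : 1 ≤ r) :
    exp (-(1 / 4)) * exp (-Q * r) ≤ ∫ t in Ioi 0, greenIntegrand m Q r t := by
  have hr₀ : 0 < r := by linarith
  have hK := exp_neg_div_le_integral_rpow_mul_exp hQ hr₀ (by norm_num : (0 : ℝ) < 1 / 4)
  calc exp (-(1 / 4)) * exp (-Q * r)
      ≤ (1 + r) / r * exp (-(1 / 4)) * exp (-Q * r) := by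
        gcongr
        exact le_mul_of_one_le_left (exp_pos _).le ((one_le_div hr₀).mpr (by linarith))
    _ = (1 + r) * exp (-Q * r) * (exp (-(1 / 4)) / r) := by ring
    _ ≤ (1 + r) * exp (-Q * r) *
          ∫ t in Ioi 0, t ^ (-(3 : ℝ) / 2) * exp (-(1 / 4) * (Q * t - r) ^ 2 / t) := by gcongr
    _ ≤ ∫ t in Ioi 0, greenIntegrand m Q r t := by
        rw [← integral_const_mul]
        exact setIntegral_mono_on ((integrableOn_rpow_mul_exp hQ hr₀ (by norm_num)).const_mul _)
          (integrableOn_greenIntegrand hm hQ hr) measurableSet_Ioi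
          fun t ht => le_greenIntegrand hm hr₀.le ht

end GreenIntegrand

theorem stmt_16 (n : ℕ) (hn : 3 ≤ n) (Q : ℝ) (hQ : 0 < Q) :
    ∃ c C : ℝ, 0 < c ∧ c ≤ C ∧ ∀ r : ℝ, 1 ≤ r →
      c * Real.exp (-Q * r) ≤
        (∫ t in Ioi (0 : ℝ), t ^ (-(3 : ℝ) / 2) * (1 + r) *
          (1 + (1 + r) / t) ^ (((n : ℝ) - 3) / 2) *
          Real.exp (-Q ^ 2 * t / 4 - Q * r / 2 - r ^ 2 / (4 * t))) ∧
      (∫ t in Ioi (0 : ℝ), t ^ (-(3 : ℝ) / 2) * (1 + r) *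
          (1 + (1 + r) / t) ^ (((n : ℝ) - 3) / 2) *
          Real.exp (-Q ^ 2 * t / 4 - Q * r / 2 - r ^ 2 / (4 * t))) ≤
        C * Real.exp (-Q * r) := by
  have hm : 0 ≤ ((n : ℝ) - 3) / 2 := by
    have : (3 : ℝ) ≤ n := by exact_mod_cast hn
    linarith
  have lower r (hr : 1 ≤ r) := exp_neg_mul_le_integral_greenIntegrand hm hQ.le hr
  have upper r (hr : 1 ≤ r) := integral_greenIntegrand_le hm hQ.le hr
  refine ⟨_, _, exp_pos _, ?_, fun r hr => ⟨lower r hr, upper r hr⟩⟩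
  exact le_of_mul_le_mul_right ((lower 1 le_rfl).trans (upper 1 le_rfl)) (exp_pos _)
end

section
/- Let n ≥ 3 be an integer and Q > 0 a real number. For r > 0 define G(r) = ∫₀^∞ t^{−3/2} (1+r) (1 + (1+r)/t)^{(n−3)/2} exp(−Q²t/4 − Qr/2 − r²/(4t)) dt. Then there exist constants 0 < c ≤ C such that c·r^{2−n} ≤ G(r) ≤ C·r^{2−n} for all 0 < r ≤ 1. -/
open MeasureTheory Real Set
open scoped Nat

/-!
Split the `t`-integral at `t = r²`. On `(0, r²]` the factor `exp (-r² / (4t))` beats every power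
of `1 / t`, so the integrand is `O(r⁻ⁿ)` on an interval of length `r²`. On `(r², ∞)` the base
`1 + (1 + r) / t` is at most `3 / r²`, so the integrand is `O(r³⁻ⁿ t^(-3/2))`, whose integral is
`O(r²⁻ⁿ)`. Conversely the integrand is `≳ r⁻ⁿ` on `(r², 2r²]`, again an interval of length `r²`.
-/

noncomputable def heatKernelProfile (n : ℕ) (Q r t : ℝ) : ℝ :=
  t ^ (-(3 : ℝ) / 2) * (1 + r) * (1 + (1 + r) / t) ^ (((n : ℝ) - 3) / 2) *
    exp (-Q ^ 2 * t / 4 - Q * r / 2 - r ^ 2 / (4 * t))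

lemma rpow_mul_exp_neg_le_factorial {a u : ℝ} {k : ℕ} (ha : 0 ≤ a) (hak : a ≤ k) (hu : 0 ≤ u) :
    u ^ a * exp (-u) ≤ k ! := by
  rcases le_or_gt 1 u with hu1 | hu1
  · have hpow : u ^ k ≤ k ! * exp u :=
      (div_le_iff₀' (by positivity)).1 (pow_div_factorial_le_exp u hu k)
    calc u ^ a * exp (-u) ≤ u ^ (k : ℝ) * exp (-u) := by gcongr
      _ = u ^ k / exp u := by rw [rpow_natCast, exp_neg, div_eq_mul_inv]
      _ ≤ k ! := by rwa [div_le_iff₀ (exp_pos u)]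
  · calc u ^ a * exp (-u) ≤ 1 * 1 := by
          gcongr
          · exact rpow_le_one hu hu1.le ha
          · exact exp_le_one_iff.2 (neg_nonpos.2 hu)
      _ ≤ k ! := by rw [one_mul]; exact_mod_cast k.factorial_pos

lemma rpow_neg_mul_exp_neg_div_le {a c t : ℝ} {k : ℕ} (ha : 0 ≤ a) (hak : a ≤ k) (hc : 0 < c)
    (ht : 0 < t) : t ^ (-a) * exp (-(c / t)) ≤ k ! * c ^ (-a) := by
  have hsplit : t ^ (-a) = c ^ (-a) * (c / t) ^ a := by
    rw [div_rpow hc.le ht.le, rpow_neg hc.le, rpow_neg ht.le]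
    field_simp
  rw [hsplit, mul_assoc, mul_comm (k ! : ℝ)]
  exact mul_le_mul_of_nonneg_left (rpow_mul_exp_neg_le_factorial ha hak (by positivity))
    (by positivity)

lemma rpow_neg_mul_sq {r : ℝ} (hr : 0 < r) (a : ℝ) : r ^ (-a) * r ^ 2 = r ^ (2 - a) := by
  rw [← rpow_natCast, ← rpow_add hr]
  ring_nf

section heatKernelProfile

variable {n : ℕ} {Q r t : ℝ}

lemma measurable_heatKernelProfile : Measurable (heatKernelProfile n Q r) := by
  unfold heatKernelProfile
  fun_prop

lemma heatKernelProfile_nonneg (hr : 0 ≤ r) (ht : 0 < t) : 0 ≤ heatKernelProfile n Q r t := by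
  unfold heatKernelProfile
  positivity

lemma heatKernelProfile_le (hn : 3 ≤ n) (hQ : 0 ≤ Q) (hr : 0 ≤ r) (hr1 : r ≤ 1) (ht : 0 < t)
    {B : ℝ} (hB : 1 + 2 / t ≤ B) :
    heatKernelProfile n Q r t ≤
      2 * B ^ (((n : ℝ) - 3) / 2) * t ^ (-(3 : ℝ) / 2) * exp (-(r ^ 2 / (4 * t))) := by
  have hν : 0 ≤ ((n : ℝ) - 3) / 2 := by
    have : (3 : ℝ) ≤ n := by exact_mod_cast hn
    linarith
  have hbase : 1 + (1 + r) / t ≤ B := le_trans (by gcongr; linarith) hB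
  have hexp : -Q ^ 2 * t / 4 - Q * r / 2 - r ^ 2 / (4 * t) ≤ -(r ^ 2 / (4 * t)) := by
    have : 0 ≤ Q * r := mul_nonneg hQ hr
    have : 0 ≤ Q ^ 2 * t := by positivity
    linarith
  have hB0 : 0 ≤ B := by
    have : 0 ≤ 2 / t := by positivity
    linarith
  calc heatKernelProfile n Q r t
      ≤ t ^ (-(3 : ℝ) / 2) * 2 * B ^ (((n : ℝ) - 3) / 2) * exp (-(r ^ 2 / (4 * t))) := by
        unfold heatKernelProfile
        gcongr
        linarith
    _ = _ := by ring

lemma heatKernelProfile_le_of_le_sq (hn : 3 ≤ n) (hQ : 0 ≤ Q) (hr : 0 < r) (hr1 : r ≤ 1)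
    (ht : 0 < t) (htr : t ≤ r ^ 2) :
    heatKernelProfile n Q r t ≤ 2 * 3 ^ (((n : ℝ) - 3) / 2) * n ! * 2 ^ n * r ^ (-(n : ℝ)) := by
  have ht1 : t ≤ 1 := htr.trans (pow_le_one₀ hr.le hr1)
  have hB : 1 + 2 / t ≤ 3 / t := by
    have := one_le_one_div ht ht1
    rw [show 3 / t = 1 / t + 2 / t by ring]
    linarith
  have hpow : (3 / t) ^ (((n : ℝ) - 3) / 2) * t ^ (-(3 : ℝ) / 2) =
      3 ^ (((n : ℝ) - 3) / 2) * t ^ (-((n : ℝ) / 2)) := by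
    rw [div_rpow (by norm_num) ht.le, div_eq_mul_inv, ← rpow_neg ht.le, mul_assoc,
      ← rpow_add ht]
    ring_nf
  have hc : ((r / 2) ^ 2) ^ (-((n : ℝ) / 2)) = 2 ^ n * r ^ (-(n : ℝ)) := by
    rw [← rpow_natCast_mul (div_nonneg hr.le zero_le_two), div_rpow hr.le zero_le_two,
      show ((2 : ℕ) : ℝ) * -((n : ℝ) / 2) = -n by push_cast; ring, rpow_neg zero_le_two,
      rpow_natCast]
    field_simp
  calc heatKernelProfile n Q r t
      ≤ 2 * (3 / t) ^ (((n : ℝ) - 3) / 2) * t ^ (-(3 : ℝ) / 2) * exp (-(r ^ 2 / (4 * t))) :=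
        heatKernelProfile_le hn hQ hr.le hr1 ht hB
    _ = 2 * 3 ^ (((n : ℝ) - 3) / 2) * (t ^ (-((n : ℝ) / 2)) * exp (-((r / 2) ^ 2 / t))) := by
        rw [mul_assoc 2, hpow]
        ring_nf
    _ ≤ 2 * 3 ^ (((n : ℝ) - 3) / 2) * (n ! * ((r / 2) ^ 2) ^ (-((n : ℝ) / 2))) := by
        refine mul_le_mul_of_nonneg_left ?_ (by positivity)
        exact rpow_neg_mul_exp_neg_div_le (by positivity) (half_le_self n.cast_nonneg)
          (pow_pos (half_pos hr) 2) ht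
    _ = _ := by rw [hc]; ring

lemma heatKernelProfile_le_of_sq_lt (hn : 3 ≤ n) (hQ : 0 ≤ Q) (hr : 0 < r) (hr1 : r ≤ 1)
    (htr : r ^ 2 < t) :
    heatKernelProfile n Q r t ≤ 2 * (3 / r ^ 2) ^ (((n : ℝ) - 3) / 2) * t ^ (-(3 : ℝ) / 2) := by
  have hr2 : 0 < r ^ 2 := by positivity
  have ht : 0 < t := hr2.trans htr
  have hB : 1 + 2 / t ≤ 3 / r ^ 2 := by
    have h1 := one_le_one_div hr2 (pow_le_one₀ hr.le hr1)
    have h2 : 2 / t ≤ 2 / r ^ 2 := by gcongr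
    rw [show 3 / r ^ 2 = 1 / r ^ 2 + 2 / r ^ 2 by ring]
    linarith
  calc heatKernelProfile n Q r t
      ≤ 2 * (3 / r ^ 2) ^ (((n : ℝ) - 3) / 2) * t ^ (-(3 : ℝ) / 2) * exp (-(r ^ 2 / (4 * t))) :=
        heatKernelProfile_le hn hQ hr.le hr1 ht hB
    _ ≤ 2 * (3 / r ^ 2) ^ (((n : ℝ) - 3) / 2) * t ^ (-(3 : ℝ) / 2) * 1 := by
        gcongr
        exact exp_le_one_iff.2 (neg_nonpos.2 (by positivity))
    _ = _ := mul_one _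

lemma le_heatKernelProfile (hn : 3 ≤ n) (hQ : 0 ≤ Q) (hr : 0 < r) (hr1 : r ≤ 1)
    (ht : t ∈ Ioc (r ^ 2) (2 * r ^ 2)) :
    (2 * r ^ 2) ^ (-((n : ℝ) / 2)) * exp (-(Q ^ 2 / 2 + Q / 2 + 1 / 4)) ≤
      heatKernelProfile n Q r t := by
  obtain ⟨htl, htu⟩ := ht
  have hν : 0 ≤ ((n : ℝ) - 3) / 2 := by
    have : (3 : ℝ) ≤ n := by exact_mod_cast hn
    linarith
  have hr2 : 0 < r ^ 2 := by positivity
  have ht : 0 < t := hr2.trans htl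
  have hpow : (2 * r ^ 2) ^ (-((n : ℝ) / 2)) =
      (2 * r ^ 2) ^ (-(3 : ℝ) / 2) * (2 * r ^ 2)⁻¹ ^ (((n : ℝ) - 3) / 2) := by
    rw [inv_rpow (by positivity), ← rpow_neg (by positivity), ← rpow_add (by positivity)]
    ring_nf
  have hbase : (2 * r ^ 2)⁻¹ ≤ 1 + (1 + r) / t := by
    have : (2 * r ^ 2)⁻¹ ≤ t⁻¹ := inv_anti₀ ht htu
    have : t⁻¹ ≤ (1 + r) / t := by rw [inv_eq_one_div]; gcongr; linarith
    have : 0 ≤ (1 + r) / t := by positivity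
    linarith
  have hexp : -(Q ^ 2 / 2 + Q / 2 + 1 / 4) ≤ -Q ^ 2 * t / 4 - Q * r / 2 - r ^ 2 / (4 * t) := by
    have h1 : Q ^ 2 * t ≤ Q ^ 2 * 2 := by
      gcongr
      nlinarith [pow_le_one₀ (n := 2) hr.le hr1]
    have h2 : Q * r ≤ Q := by nlinarith
    have h3 : r ^ 2 / (4 * t) ≤ 1 / 4 := by
      rw [div_le_div_iff₀ (by positivity) (by norm_num)]
      linarith
    linarith
  calc (2 * r ^ 2) ^ (-((n : ℝ) / 2)) * exp (-(Q ^ 2 / 2 + Q / 2 + 1 / 4))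
      = (2 * r ^ 2) ^ (-(3 : ℝ) / 2) * 1 * (2 * r ^ 2)⁻¹ ^ (((n : ℝ) - 3) / 2) *
          exp (-(Q ^ 2 / 2 + Q / 2 + 1 / 4)) := by rw [hpow, mul_one]
    _ ≤ heatKernelProfile n Q r t := by
        have ht32 : (2 * r ^ 2) ^ (-(3 : ℝ) / 2) ≤ t ^ (-(3 : ℝ) / 2) :=
          rpow_le_rpow_of_nonpos ht htu (by norm_num)
        unfold heatKernelProfile
        gcongr
        linarith

lemma integrableOn_Ioc_sq_heatKernelProfile (hn : 3 ≤ n) (hQ : 0 ≤ Q) (hr : 0 < r) (hr1 : r ≤ 1) :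
    IntegrableOn (heatKernelProfile n Q r) (Ioc 0 (r ^ 2)) :=
  Measure.integrableOn_of_bounded measure_Ioc_lt_top.ne
    measurable_heatKernelProfile.aestronglyMeasurable
    ((ae_restrict_iff' measurableSet_Ioc).2 (ae_of_all _ fun t ht => by
      rw [norm_of_nonneg (heatKernelProfile_nonneg hr.le ht.1)]
      exact heatKernelProfile_le_of_le_sq hn hQ hr hr1 ht.1 ht.2))

lemma integrableOn_Ioi_sq_heatKernelProfile (hn : 3 ≤ n) (hQ : 0 ≤ Q) (hr : 0 < r) (hr1 : r ≤ 1) :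
    IntegrableOn (heatKernelProfile n Q r) (Ioi (r ^ 2)) :=
  ((integrableOn_Ioi_rpow_of_lt (a := -(3 : ℝ) / 2) (by norm_num) (pow_pos hr 2)).const_mul _).mono'
    measurable_heatKernelProfile.aestronglyMeasurable
    ((ae_restrict_iff' measurableSet_Ioi).2 (ae_of_all _ fun t ht => by
      rw [norm_of_nonneg (heatKernelProfile_nonneg hr.le ((pow_pos hr 2).trans ht))]
      exact heatKernelProfile_le_of_sq_lt hn hQ hr hr1 ht))

lemma integrableOn_heatKernelProfile (hn : 3 ≤ n) (hQ : 0 ≤ Q) (hr : 0 < r) (hr1 : r ≤ 1) :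
    IntegrableOn (heatKernelProfile n Q r) (Ioi 0) := by
  rw [← Ioc_union_Ioi_eq_Ioi (sq_nonneg r)]
  exact (integrableOn_Ioc_sq_heatKernelProfile hn hQ hr hr1).union
    (integrableOn_Ioi_sq_heatKernelProfile hn hQ hr hr1)

lemma setIntegral_Ioc_sq_heatKernelProfile_le (hn : 3 ≤ n) (hQ : 0 ≤ Q) (hr : 0 < r)
    (hr1 : r ≤ 1) :
    ∫ t in Ioc 0 (r ^ 2), heatKernelProfile n Q r t ≤
      2 * 3 ^ (((n : ℝ) - 3) / 2) * n ! * 2 ^ n * r ^ (2 - (n : ℝ)) := by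
  calc ∫ t in Ioc 0 (r ^ 2), heatKernelProfile n Q r t
      ≤ ‖∫ t in Ioc 0 (r ^ 2), heatKernelProfile n Q r t‖ := le_norm_self _
    _ ≤ 2 * 3 ^ (((n : ℝ) - 3) / 2) * n ! * 2 ^ n * r ^ (-(n : ℝ)) * volume.real (Ioc 0 (r ^ 2)) :=
        norm_setIntegral_le_of_norm_le_const measure_Ioc_lt_top fun t ht => by
          rw [norm_of_nonneg (heatKernelProfile_nonneg hr.le ht.1)]
          exact heatKernelProfile_le_of_le_sq hn hQ hr hr1 ht.1 ht.2
    _ = _ := by rw [volume_real_Ioc_of_le (sq_nonneg r), sub_zero, mul_assoc, rpow_neg_mul_sq hr]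

lemma setIntegral_Ioi_sq_heatKernelProfile_le (hn : 3 ≤ n) (hQ : 0 ≤ Q) (hr : 0 < r)
    (hr1 : r ≤ 1) :
    ∫ t in Ioi (r ^ 2), heatKernelProfile n Q r t ≤
      4 * 3 ^ (((n : ℝ) - 3) / 2) * r ^ (2 - (n : ℝ)) := by
  have hpow : (3 / r ^ 2) ^ (((n : ℝ) - 3) / 2) * (r ^ 2) ^ (-(3 : ℝ) / 2 + 1) =
      3 ^ (((n : ℝ) - 3) / 2) * r ^ (2 - (n : ℝ)) := by
    rw [div_rpow zero_le_three (sq_nonneg r), show -(3 : ℝ) / 2 + 1 = -1 / 2 by norm_num,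
      rpow_div_two_eq_sqrt _ (sq_nonneg r), rpow_div_two_eq_sqrt _ (sq_nonneg r), sqrt_sq hr.le,
      mul_comm_div, ← rpow_sub hr]
    ring_nf
  calc ∫ t in Ioi (r ^ 2), heatKernelProfile n Q r t
      ≤ ∫ t in Ioi (r ^ 2), 2 * (3 / r ^ 2) ^ (((n : ℝ) - 3) / 2) * t ^ (-(3 : ℝ) / 2) :=
        setIntegral_mono_on (integrableOn_Ioi_sq_heatKernelProfile hn hQ hr hr1)
          ((integrableOn_Ioi_rpow_of_lt (by norm_num) (pow_pos hr 2)).const_mul _)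
          measurableSet_Ioi fun t ht => heatKernelProfile_le_of_sq_lt hn hQ hr hr1 ht
    _ = _ := by
        rw [integral_const_mul, integral_Ioi_rpow_of_lt (by norm_num) (pow_pos hr 2), mul_assoc 4,
          ← hpow]
        ring

end heatKernelProfile

theorem exists_integral_heatKernelProfile_le {n : ℕ} (hn : 3 ≤ n) {Q : ℝ} (hQ : 0 ≤ Q) :
    ∃ C : ℝ, ∀ r : ℝ, 0 < r → r ≤ 1 →
      ∫ t in Ioi 0, heatKernelProfile n Q r t ≤ C * r ^ (2 - (n : ℝ)) := by
  refine ⟨2 * 3 ^ (((n : ℝ) - 3) / 2) * n ! * 2 ^ n + 4 * 3 ^ (((n : ℝ) - 3) / 2),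
    fun r hr hr1 => ?_⟩
  rw [← Ioc_union_Ioi_eq_Ioi (sq_nonneg r), setIntegral_union Ioc_disjoint_Ioi_same
    measurableSet_Ioi (integrableOn_Ioc_sq_heatKernelProfile hn hQ hr hr1)
    (integrableOn_Ioi_sq_heatKernelProfile hn hQ hr hr1), add_mul]
  exact add_le_add (setIntegral_Ioc_sq_heatKernelProfile_le hn hQ hr hr1)
    (setIntegral_Ioi_sq_heatKernelProfile_le hn hQ hr hr1)

theorem exists_mul_rpow_le_integral_heatKernelProfile {n : ℕ} (hn : 3 ≤ n) {Q : ℝ}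
    (hQ : 0 ≤ Q) :
    ∃ c > 0, ∀ r : ℝ, 0 < r → r ≤ 1 →
      c * r ^ (2 - (n : ℝ)) ≤ ∫ t in Ioi 0, heatKernelProfile n Q r t := by
  refine ⟨2 ^ (-((n : ℝ) / 2)) * exp (-(Q ^ 2 / 2 + Q / 2 + 1 / 4)), by positivity,
    fun r hr hr1 => ?_⟩
  have hsub : Ioc (r ^ 2) (2 * r ^ 2) ⊆ Ioi 0 := fun t ht => (pow_pos hr 2).trans ht.1
  have hint := integrableOn_heatKernelProfile hn hQ hr hr1
  calc 2 ^ (-((n : ℝ) / 2)) * exp (-(Q ^ 2 / 2 + Q / 2 + 1 / 4)) * r ^ (2 - (n : ℝ))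
      = (2 * r ^ 2) ^ (-((n : ℝ) / 2)) * exp (-(Q ^ 2 / 2 + Q / 2 + 1 / 4)) *
          volume.real (Ioc (r ^ 2) (2 * r ^ 2)) := by
        rw [volume_real_Ioc_of_le (by nlinarith), mul_rpow zero_le_two (sq_nonneg r), ← neg_div,
          rpow_div_two_eq_sqrt _ (sq_nonneg r), sqrt_sq hr.le, ← rpow_neg_mul_sq hr]
        ring
    _ ≤ ∫ t in Ioc (r ^ 2) (2 * r ^ 2), heatKernelProfile n Q r t :=
        setIntegral_ge_of_const_le_real measurableSet_Ioc measure_Ioc_lt_top.ne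
          (fun t ht => le_heatKernelProfile hn hQ hr hr1 ht) (hint.mono_set hsub)
    _ ≤ ∫ t in Ioi 0, heatKernelProfile n Q r t :=
        setIntegral_mono_set hint
          ((ae_restrict_iff' measurableSet_Ioi).2
            (ae_of_all _ fun t ht => heatKernelProfile_nonneg hr.le ht))
          hsub.eventuallyLE

theorem stmt_17 (n : ℕ) (hn : 3 ≤ n) (Q : ℝ) (hQ : 0 < Q) :
    ∃ c C : ℝ, 0 < c ∧ c ≤ C ∧ ∀ r : ℝ, 0 < r → r ≤ 1 →
      c * r ^ ((2 : ℝ) - n) ≤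
        (∫ t in Ioi (0 : ℝ), t ^ (-(3 : ℝ) / 2) * (1 + r) *
          (1 + (1 + r) / t) ^ (((n : ℝ) - 3) / 2) *
          Real.exp (-Q ^ 2 * t / 4 - Q * r / 2 - r ^ 2 / (4 * t))) ∧
      (∫ t in Ioi (0 : ℝ), t ^ (-(3 : ℝ) / 2) * (1 + r) *
          (1 + (1 + r) / t) ^ (((n : ℝ) - 3) / 2) *
          Real.exp (-Q ^ 2 * t / 4 - Q * r / 2 - r ^ 2 / (4 * t))) ≤
        C * r ^ ((2 : ℝ) - n) := by
  obtain ⟨c, hc, hlower⟩ := exists_mul_rpow_le_integral_heatKernelProfile hn hQ.le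
  obtain ⟨C, hupper⟩ := exists_integral_heatKernelProfile_le hn hQ.le
  have hcC : c ≤ C := by
    simpa using (hlower 1 one_pos le_rfl).trans (hupper 1 one_pos le_rfl)
  exact ⟨c, C, hc, hcC, fun r hr hr1 => ⟨hlower r hr hr1, hupper r hr hr1⟩⟩
end

section
/- Let n > 2 be a real number and λ > 0. Then lim_{r → 0⁺} r^{n−2} · ∫₀^∞ t^{−n/2} exp(−λ t − r²/(4t)) dt = 2^{n−2} · Γ(n/2 − 1), i.e. ∫₀^∞ t^{−n/2} exp(−λ t − r²/(4t)) dt is asymptotic to Γ(n/2 − 1) · (r²/4)^{1−n/2} as r → 0⁺. -/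
open MeasureTheory Real Set Filter Topology

/-!
The substitution `t = r² s` turns `r ^ (n - 2) * ∫ t ^ (-n/2) exp (-λ t - r² / (4 t)) dt` into
`∫ s ^ (-n/2) exp (-λ r² s - 1 / (4 s)) ds`. As `r → 0⁺` this tends, by dominated convergence
with the `λ = 0` integrand as dominating function, to `∫ s ^ (-n/2) exp (-1 / (4 s)) ds`, which
the substitution `s = 1 / x` turns into a Gamma integral equal to `4 ^ (n/2 - 1) Γ(n/2 - 1)`.
-/

theorem integral_rpow_neg_mul_exp_neg_inv {a m : ℝ} (ha : 1 < a) (hm : 0 < m) :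
    ∫ s in Ioi (0 : ℝ), s ^ (-a) * exp (-(1 / (m * s))) = m ^ (a - 1) * Gamma (a - 1) := by
  rw [← integral_comp_rpow_Ioi _ (p := -1) (by norm_num)]
  have h_inv : ∀ x ∈ Ioi (0 : ℝ), (|(-1 : ℝ)| * x ^ ((-1 : ℝ) - 1)) •
      ((x ^ (-1 : ℝ)) ^ (-a) * exp (-(1 / (m * x ^ (-1 : ℝ)))))
        = x ^ (a - 1 - 1) * exp (-(1 / m * x)) := by
    intro x (hx : 0 < x)
    rw [rpow_neg_one, inv_rpow hx.le, rpow_neg hx.le, inv_inv, smul_eq_mul, abs_neg, abs_one,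
      one_mul, ← mul_assoc, ← rpow_add hx]
    congr 2
    · ring
    · field_simp
  rw [setIntegral_congr_fun measurableSet_Ioi h_inv,
    integral_rpow_mul_exp_neg_mul_Ioi (by linarith) (by positivity), one_div_one_div]

theorem tendsto_integral_rpow_neg_mul_exp_neg_mul_sub_inv {a m : ℝ} (ha : 1 < a) (hm : 0 < m) :
    Tendsto (fun μ => ∫ s in Ioi (0 : ℝ), s ^ (-a) * exp (-μ * s - 1 / (m * s))) (𝓝[≥] 0)
      (𝓝 (m ^ (a - 1) * Gamma (a - 1))) := by
  rw [← integral_rpow_neg_mul_exp_neg_inv ha hm]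
  have h_int : IntegrableOn (fun s => s ^ (-a) * exp (-(1 / (m * s)))) (Ioi 0) :=
    .of_integral_ne_zero <| by
      rw [integral_rpow_neg_mul_exp_neg_inv ha hm]
      have := Gamma_pos_of_pos (sub_pos.mpr ha)
      positivity
  refine tendsto_integral_filter_of_dominated_convergence _
    (.of_forall fun μ => by fun_prop) ?_ h_int ?_
  · filter_upwards [self_mem_nhdsWithin] with μ (hμ : 0 ≤ μ)
    rw [ae_restrict_iff' measurableSet_Ioi]
    refine .of_forall fun s (hs : 0 < s) => ?_
    rw [norm_mul, norm_of_nonneg (rpow_nonneg hs.le _), norm_of_nonneg (exp_pos _).le]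
    gcongr
    nlinarith [mul_nonneg hμ hs.le]
  · refine .of_forall fun s => ?_
    have h_cont : Continuous fun μ : ℝ => s ^ (-a) * exp (-μ * s - 1 / (m * s)) := by fun_prop
    simpa using (h_cont.tendsto 0).mono_left nhdsWithin_le_nhds

theorem integral_rpow_neg_mul_exp_neg_mul_sub_div_comp_mul (a lam m : ℝ) {k : ℝ} (hk : 0 < k) :
    ∫ t in Ioi (0 : ℝ), t ^ (-a) * exp (-lam * t - k / (m * t))
      = k ^ (1 - a) * ∫ s in Ioi (0 : ℝ), s ^ (-a) * exp (-(lam * k) * s - 1 / (m * s)) := by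
  have h_sub := integral_comp_mul_left_Ioi
    (fun t => t ^ (-a) * exp (-lam * t - k / (m * t))) 0 hk
  rw [mul_zero, smul_eq_mul, eq_inv_mul_iff_mul_eq₀ hk.ne'] at h_sub
  rw [← h_sub, ← integral_const_mul, ← integral_const_mul]
  refine setIntegral_congr_fun measurableSet_Ioi fun s (hs : 0 < s) => ?_
  have h_arg : -lam * (k * s) - k / (m * (k * s)) = -(lam * k) * s - 1 / (m * s) := by
    rw [mul_left_comm m k s, ← div_div, div_self hk.ne']
    ring
  rw [mul_rpow hk.le hs.le, h_arg, rpow_sub hk, rpow_one, rpow_neg hk.le]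
  field_simp

theorem stmt_19 (n : ℝ) (hn : 2 < n) (lam : ℝ) (hlam : 0 < lam) :
    Tendsto (fun r : ℝ => r ^ (n - 2) *
        ∫ t in Ioi (0 : ℝ), t ^ (-n / 2) * Real.exp (-lam * t - r ^ 2 / (4 * t)))
      (nhdsWithin 0 (Ioi 0))
      (nhds ((2 : ℝ) ^ (n - 2) * Real.Gamma (n / 2 - 1))) := by
  have h_scale : ∀ r : ℝ, 0 < r → r ^ (n - 2) *
      ∫ t in Ioi (0 : ℝ), t ^ (-n / 2) * exp (-lam * t - r ^ 2 / (4 * t))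
        = ∫ s in Ioi (0 : ℝ), s ^ (-(n / 2)) * exp (-(lam * r ^ 2) * s - 1 / (4 * s)) := by
    intro r hr
    rw [neg_div, integral_rpow_neg_mul_exp_neg_mul_sub_div_comp_mul _ _ _ (pow_pos hr 2), ← mul_assoc,
      ← rpow_natCast, ← rpow_mul hr.le, ← rpow_add hr]
    norm_num [show n - 2 + 2 * (1 - n / 2) = 0 by ring]
  have h_param : Tendsto (fun r : ℝ => lam * r ^ 2) (𝓝[>] 0) (𝓝[≥] 0) := by
    refine tendsto_nhdsWithin_iff.mpr ⟨?_, .of_forall fun r => mem_Ici.mpr (by positivity)⟩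
    exact ((by fun_prop : Continuous fun r : ℝ => lam * r ^ 2).tendsto' 0 0 (by simp)).mono_left
      nhdsWithin_le_nhds
  have h_four : (4 : ℝ) ^ (n / 2 - 1) = 2 ^ (n - 2) := by
    rw [show (4 : ℝ) = 2 ^ (2 : ℝ) by norm_num, ← rpow_mul zero_le_two]
    ring_nf
  have h_lim := (tendsto_integral_rpow_neg_mul_exp_neg_mul_sub_inv (a := n / 2)
    (by linarith) four_pos).comp h_param
  rw [h_four] at h_lim
  refine h_lim.congr' ?_
  filter_upwards [self_mem_nhdsWithin] with r hr
  exact (h_scale r hr).symm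
end
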